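/- arXiv:0707.4656 — 4 statements merged into one kernel-verified Lean document; each statement's English description precedes it below -/
import Mathlib

section
/- (Converse.) Suppose Q(y|⋆) > 0 for all y ∈ 𝒴. Then no coding strategy achieves an asynchronism exponent strictly greater than max_{x∈𝒳} D(Q(·|x)||Q(·|⋆)): for every α > max_x D(Q(·|x)||Q(·|⋆)) there exists δ > 0 such that for all sufficiently large N, every codebook with M ≥ 2 codewords of length N and every sequential decoder (τ,φ) operating at asynchronism level A ≥ e^{αN} has error probability P(E) ≥ δ. -/
/-!
Compare every hypothesis "message `m` sent at time `l`" with pure noise through the likelihood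
ratio `r_{m,l} = P_{m,l} / P_⋆`. Its logarithm is a sum of at most `N` independent terms with
mean at most `d N`, where `d < α` bounds `D(Q(·|x) ‖ Q(·|⋆))`, so by Chebyshev `r_{m,l}` exceeds
`θ = e^{(d + κ) N}` with `P_{m,l}`-probability `O(1/N)`. Below `θ`, `P_{m,l}(φ = m)` is the noise
expectation of `min(r_{m,l}, θ) 1{φ = m}`; summing over `l` and using Cauchy–Schwarz bounds this by
`√(E_⋆ S_m²) √(P_⋆(φ = m))` with `S_m = Σ_l min(r_{m,l}, θ)`. Ratios of non-overlapping windows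
are uncorrelated under noise and each window meets fewer than `2N` others, so
`E_⋆ S_m² ≤ A (A + 2Nθ)`, which is about `A²` once `A ≥ e^{αN}`. Finally
`Σ_m √(P_⋆(φ = m)) ≤ √M`, and for `M ≥ 2` at most a fraction `7/8` of the `A M` hypotheses
can be decoded correctly.
-/

open scoped BigOperators ENNReal

namespace Async

variable {X : Type*} {Y : Type*}

/-- `μ` is a probability distribution on a finite alphabet. -/
def IsDist {A : Type*} [Fintype A] (μ : A → ℝ) : Prop :=
  (∀ a, 0 ≤ μ a) ∧ ∑ a, μ a = 1

/-- `Q` is a stochastic matrix (discrete memoryless channel). -/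
def IsChannel [Fintype X] [Fintype Y] (Q : X → Y → ℝ) : Prop :=
  ∀ x, IsDist (Q x)

open scoped Classical in
/-- Kullback–Leibler divergence `D(μ‖ν)`, valued in `[0,∞]`. -/
noncomputable def klDiv {A : Type*} [Fintype A] (μ ν : A → ℝ) : ℝ≥0∞ :=
  if ∀ a, ν a = 0 → μ a = 0 then
    ENNReal.ofReal (∑ a, μ a * Real.log (μ a / ν a))
  else ⊤

/-- Real-valued Kullback–Leibler divergence (finite regime). -/
noncomputable def klDivR {A : Type*} [Fintype A] (μ ν : A → ℝ) : ℝ :=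
  ∑ a, μ a * Real.log (μ a / ν a)

/-- Left (input) marginal of a joint distribution on `X × Y`. -/
noncomputable def margX [Fintype Y] (V : X × Y → ℝ) : X → ℝ :=
  fun x => ∑ y, V (x, y)

/-- Right (output) marginal of a joint distribution on `X × Y`. -/
noncomputable def margY [Fintype X] (V : X × Y → ℝ) : Y → ℝ :=
  fun y => ∑ x, V (x, y)

/-- Mutual information `I(V)` of a joint distribution `V` on `X × Y`. -/
noncomputable def mi [Fintype X] [Fintype Y] (V : X × Y → ℝ) : ℝ :=
  ∑ p : X × Y, V p * Real.log (V p / (margX V p.1 * margY V p.2))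

/-- The joint distribution `P(x)Q(y|x)` of an input distribution and a channel. -/
noncomputable def joint (P : X → ℝ) (Q : X → Y → ℝ) : X × Y → ℝ :=
  fun p => P p.1 * Q p.1 p.2

/-- Capacity of the synchronized channel: `C(Q) = max_P I(PQ)`. -/
noncomputable def capacity [Fintype X] [Fintype Y] (Q : X → Y → ℝ) : ℝ :=
  sSup {v : ℝ | ∃ P : X → ℝ, IsDist P ∧ v = mi (joint P Q)}

/-- A sequential decoder: a stopping time `τ` (w.r.t. the natural filtration of the
output sequence, times `1,…,T`) together with an `F_τ`-measurable decision `φ`. -/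
structure Decoder (Y : Type*) (T M : ℕ) where
  τ : (Fin T → Y) → ℕ
  φ : (Fin T → Y) → Fin M
  τ_le : ∀ y, τ y ≤ T
  stopping : ∀ y y', (∀ t : Fin T, (t : ℕ) < τ y → y t = y' t) → τ y' = τ y
  meas : ∀ y y', (∀ t : Fin T, (t : ℕ) < τ y → y t = y' t) → φ y' = φ y

/-- Probability of the output sequence `y` (of length `T`, times `1,…,T`) when the
codeword `c` is transmitted starting at time `l`; noise symbol `star` elsewhere. -/
noncomputable def seqProb (Q : X → Y → ℝ) (star : X) {N T : ℕ}
    (c : Fin N → X) (l : ℕ) (y : Fin T → Y) : ℝ :=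
  ∏ t : Fin T,
    Q (if h : l ≤ (t : ℕ) + 1 ∧ (t : ℕ) + 1 < l + N then
        c ⟨(t : ℕ) + 1 - l, by omega⟩ else star) (y t)

/-- Average decoding error probability `P(E)` of a codebook `c` and decoder `dec`
operating at asynchronism level `A`. -/
noncomputable def errProb [Fintype Y] (Q : X → Y → ℝ) (star : X) {N M : ℕ}
    (c : Fin M → Fin N → X) (A : ℕ) (dec : Decoder Y (A + N - 1) M) : ℝ :=
  (1 / ((A : ℝ) * M)) * ∑ m : Fin M, ∑ l ∈ Finset.Icc 1 A,
    ∑ y : Fin (A + N - 1) → Y, if dec.φ y = m then 0 else seqProb Q star (c m) l y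

/-- Expected delay `E(τ-ν)⁺`. -/
noncomputable def expDelay [Fintype Y] (Q : X → Y → ℝ) (star : X) {N M : ℕ}
    (c : Fin M → Fin N → X) (A : ℕ) (dec : Decoder Y (A + N - 1) M) : ℝ :=
  (1 / ((A : ℝ) * M)) * ∑ m : Fin M, ∑ l ∈ Finset.Icc 1 A,
    ∑ y : Fin (A + N - 1) → Y, seqProb Q star (c m) l y * max ((dec.τ y : ℝ) - l) 0

/-- The asynchronism exponent `α` is achievable at rate `R`: for every `ε > 0` and all
sufficiently large `N` there is a codebook/decoder pair operating at asynchronism level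
`A = ⌈e^{(α-ε)N}⌉` with rate at least `R - ε` and error probability at most `ε`. -/
def AchievableAt [Fintype X] [Fintype Y] (Q : X → Y → ℝ) (star : X) (α R : ℝ) : Prop :=
  ∀ ε : ℝ, 0 < ε → ∃ N₀ : ℕ, ∀ N ≥ N₀, ∃ M : ℕ, 2 ≤ M ∧
    ∃ (c : Fin M → Fin N → X)
      (dec : Decoder Y (⌈Real.exp ((α - ε) * N)⌉₊ + N - 1) M),
      errProb Q star c ⌈Real.exp ((α - ε) * N)⌉₊ dec ≤ ε ∧
      R - ε ≤ Real.log M / expDelay Q star c ⌈Real.exp ((α - ε) * N)⌉₊ dec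

section FiniteSums

open Finset

variable {ι Ω : Type*} [Fintype Ω]

theorem sum_prod_mul_prod_eq_prod_sum [Fintype ι] [DecidableEq ι] [Fintype Y] (μ : ι → Y → ℝ)
    (hμ : ∀ i, ∑ b, μ i b = 1) (W : Finset ι) (u : ι → Y → ℝ) :
    ∑ y : ι → Y, (∏ i, μ i (y i)) * ∏ i ∈ W, u i (y i) = ∏ i ∈ W, ∑ b, μ i b * u i b := by
  have hext : ∀ y : ι → Y, (∏ i, μ i (y i)) * ∏ i ∈ W, u i (y i)
      = ∏ i, μ i (y i) * (if i ∈ W then u i (y i) else 1) := fun y => by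
    rw [prod_mul_distrib, Fintype.prod_extend_by_one]
  simp_rw [hext]
  rw [← Fintype.prod_sum fun i b => μ i b * if i ∈ W then u i b else 1]
  simp_rw [mul_ite, mul_one, sum_ite_irrel, hμ]
  exact Fintype.prod_extend_by_one W _

theorem sum_prod_mul_sq_sum_eq [Fintype ι] [DecidableEq ι] [Fintype Y] (μ : ι → Y → ℝ)
    (hμ : ∀ i, ∑ b, μ i b = 1) (h : ι → Y → ℝ) (hh : ∀ i, ∑ b, μ i b * h i b = 0) :
    ∑ y : ι → Y, (∏ i, μ i (y i)) * (∑ i, h i (y i)) ^ 2 = ∑ i, ∑ b, μ i b * h i b ^ 2 := by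
  have hcov : ∀ i j, ∑ y : ι → Y, (∏ k, μ k (y k)) * (h i (y i) * h j (y j))
      = if i = j then ∑ b, μ i b * (h i b * h i b) else 0 := by
    intro i j
    split_ifs with hij
    · subst hij
      simpa using sum_prod_mul_prod_eq_prod_sum μ hμ {i} fun k b => h k b * h k b
    · simpa [prod_pair hij, hh i] using sum_prod_mul_prod_eq_prod_sum μ hμ {i, j} h
  calc ∑ y : ι → Y, (∏ i, μ i (y i)) * (∑ i, h i (y i)) ^ 2
      = ∑ i, ∑ j, ∑ y : ι → Y, (∏ k, μ k (y k)) * (h i (y i) * h j (y j)) := by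
        simp_rw [sq, sum_mul_sum, mul_sum]
        rw [sum_comm]
        exact sum_congr rfl fun _ _ => sum_comm
    _ = ∑ i, ∑ b, μ i b * h i b ^ 2 := by simp [hcov, sq]

theorem sum_filter_lt_le_div_sq {P : Ω → ℝ} (hP : ∀ y, 0 ≤ P y) (f : Ω → ℝ) {a c k : ℝ}
    (hk : 0 < k) (hc : a + k ≤ c) :
    ∑ y with c < f y, P y ≤ (∑ y, P y * (f y - a) ^ 2) / k ^ 2 := by
  rw [sum_filter, sum_div]
  refine sum_le_sum fun y _ => ?_
  split_ifs with hy
  · rw [le_div_iff₀ (by positivity)]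
    exact mul_le_mul_of_nonneg_left (pow_le_pow_left₀ hk.le (by linarith) 2) (hP y)
  · have := hP y
    positivity

theorem sum_comp_le_of_card_ne_le [Fintype ι] {α : Type*} [DecidableEq α] (σ : ι → α) (a : α)
    {f : α → ℝ} {B : ℝ} (hfa : f a = 0) (hfB : ∀ x, f x ≤ B) {n : ℕ} (hσ : #{t | σ t ≠ a} ≤ n) :
    ∑ t, f (σ t) ≤ n * B := by
  have hB : 0 ≤ B := hfa ▸ hfB a
  rw [← sum_filter_add_sum_filter_not univ fun t => σ t ≠ a]
  have hzero : ∑ t with ¬σ t ≠ a, f (σ t) = 0 :=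
    sum_eq_zero fun t ht => by simp_all
  calc ∑ t with σ t ≠ a, f (σ t) + ∑ t with ¬σ t ≠ a, f (σ t)
      ≤ #{t | σ t ≠ a} • B := by
        rw [hzero, add_zero]
        exact sum_le_card_nsmul _ _ _ fun t _ => hfB _
    _ ≤ n * B := by rw [nsmul_eq_mul]; gcongr

theorem sum_mul_sq_sum_le_of_almost_orthogonal {w : Ω → ℝ} (s : Finset ι) (f : ι → Ω → ℝ)
    (near : ι → ι → Prop) [DecidableRel near] {K : ℝ} (hK : 0 ≤ K) {n : ℕ}
    (hfar : ∀ l l', ¬near l l' → ∑ y, w y * (f l y * f l' y) ≤ 1)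
    (hnear : ∀ l l', ∑ y, w y * (f l y * f l' y) ≤ K)
    (hcard : ∀ l ∈ s, #{l' ∈ s | near l l'} ≤ n) :
    ∑ y, w y * (∑ l ∈ s, f l y) ^ 2 ≤ #s * (#s + n * K) := by
  have hrow : ∀ l ∈ s, ∑ l' ∈ s, ∑ y, w y * (f l y * f l' y) ≤ #s + n * K := fun l hl =>
    calc ∑ l' ∈ s, ∑ y, w y * (f l y * f l' y) ≤ ∑ l' ∈ s, (1 + if near l l' then K else 0) := by
          refine sum_le_sum fun l' _ => ?_
          split_ifs with h
          · linarith [hnear l l']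
          · linarith [hfar l l' h]
      _ ≤ #s + n * K := by
          rw [sum_add_distrib, ← sum_filter, sum_const, sum_const, nsmul_eq_mul, nsmul_eq_mul,
            mul_one]
          gcongr
          exact hcard l hl
  calc ∑ y, w y * (∑ l ∈ s, f l y) ^ 2 = ∑ l ∈ s, ∑ l' ∈ s, ∑ y, w y * (f l y * f l' y) := by
        simp_rw [sq, sum_mul_sum, mul_sum]
        rw [sum_comm]
        exact sum_congr rfl fun _ _ => sum_comm
    _ ≤ ∑ l ∈ s, ((#s : ℝ) + n * K) := sum_le_sum hrow
    _ = #s * (#s + n * K) := by rw [sum_const, nsmul_eq_mul]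

theorem sum_filter_mul_le_sqrt_mul_sqrt {w : Ω → ℝ} (hw : ∀ y, 0 ≤ w y) (S : Ω → ℝ)
    (E : Ω → Prop) [DecidablePred E] :
    ∑ y with E y, w y * S y ≤ √(∑ y, w y * S y ^ 2) * √(∑ y with E y, w y) := by
  calc ∑ y with E y, w y * S y = ∑ y with E y, (√(w y) * S y) * √(w y) :=
        sum_congr rfl fun y _ => by rw [mul_right_comm, Real.mul_self_sqrt (hw y)]
    _ ≤ √(∑ y with E y, (√(w y) * S y) ^ 2) * √(∑ y with E y, √(w y) ^ 2) :=
        Real.sum_mul_le_sqrt_mul_sqrt _ _ _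
    _ ≤ √(∑ y, w y * S y ^ 2) * √(∑ y with E y, w y) := by
        simp_rw [mul_pow, Real.sq_sqrt (hw _)]
        gcongr
        · exact fun y _ _ => mul_nonneg (hw y) (sq_nonneg _)
        · exact filter_subset E univ

end FiniteSums

theorem sqrt_mul_add_mul_sqrt_le {a x m : ℝ} (ha : 0 ≤ a) (hx : x ≤ a / 8) (hm : 2 ≤ m) :
    √(a * (a + x)) * √m ≤ 3 / 4 * (a * m) := by
  rw [← Real.sqrt_mul' _ (by linarith)]
  refine Real.sqrt_le_iff.mpr ⟨by positivity, ?_⟩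
  have : a * (a + x) * m ≤ a * (9 / 8 * a) * m := by gcongr; linarith
  nlinarith [mul_nonneg (mul_nonneg ha ha) (by linarith : (0 : ℝ) ≤ m - 2)]

open Filter in
theorem eventually_mul_le_exp_mul (C : ℝ) {κ : ℝ} (hκ : 0 < κ) :
    ∀ᶠ x : ℝ in atTop, C * x ≤ Real.exp (κ * x) := by
  filter_upwards [(isLittleO_pow_exp_pos_mul_atTop 1 hκ).bound (c := 1 / (|C| + 1))
    (by positivity)] with x hx
  rw [pow_one, Real.norm_eq_abs, Real.norm_of_nonneg (Real.exp_pos _).le, div_mul_eq_mul_div,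
    one_mul, le_div_iff₀ (by positivity)] at hx
  nlinarith [le_abs_self (C * x), abs_mul C x, abs_nonneg x]

section ChangeOfMeasure

open Finset

variable {ι Ω : Type*} [Fintype Ω]

theorem sum_sum_sum_filter_eq_le_add_sqrt_mul_sqrt {M : ℕ} {w : Ω → ℝ} (hw : ∀ y, 0 ≤ w y)
    (hw1 : ∑ y, w y = 1) (φ : Ω → Fin M) (s : Finset ι) {r : Fin M → ι → Ω → ℝ}
    (hr : ∀ m l y, 0 ≤ r m l y)
    {θ B : ℝ} (hθ : 0 ≤ θ) (hB : ∀ m, ∑ y, w y * (∑ l ∈ s, min (r m l y) θ) ^ 2 ≤ B) :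
    ∑ m, ∑ l ∈ s, ∑ y with φ y = m, w y * r m l y
      ≤ ∑ m, ∑ l ∈ s, ∑ y with θ < r m l y, w y * r m l y + √B * √M := by
  have hsplit : ∀ m l, ∑ y with φ y = m, w y * r m l y
      ≤ ∑ y with θ < r m l y, w y * r m l y + ∑ y with φ y = m, w y * min (r m l y) θ := by
    intro m l
    simp_rw [sum_filter, ← sum_add_distrib]
    refine sum_le_sum fun y _ => ?_
    have hwr : 0 ≤ w y * r m l y := mul_nonneg (hw y) (hr m l y)
    have hwmin : 0 ≤ w y * min (r m l y) θ := mul_nonneg (hw y) (le_min (hr m l y) hθ)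
    split_ifs with hφ hlt
    · linarith
    · rw [min_eq_left (not_lt.mp hlt), zero_add]
    · linarith
    · rw [add_zero]
  have hcs : ∀ m, ∑ l ∈ s, ∑ y with φ y = m, w y * min (r m l y) θ
      ≤ √B * √(∑ y with φ y = m, w y) := by
    intro m
    rw [sum_comm]
    simp_rw [← mul_sum]
    exact (sum_filter_mul_le_sqrt_mul_sqrt hw _ _).trans (by gcongr; exact hB m)
  have hfib : ∑ m, √(∑ y with φ y = m, w y) ≤ √M := by
    simpa [sum_fiberwise, hw1] using
      Real.sum_sqrt_mul_sqrt_le univ (f := fun m => ∑ y with φ y = m, w y)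
        (fun m => sum_nonneg fun y _ => hw y) (fun _ => zero_le_one)
  calc ∑ m, ∑ l ∈ s, ∑ y with φ y = m, w y * r m l y
      ≤ ∑ m, (∑ l ∈ s, ∑ y with θ < r m l y, w y * r m l y + √B * √(∑ y with φ y = m, w y)) :=
        sum_le_sum fun m _ => (sum_le_sum fun l _ => hsplit m l).trans <| by
          rw [sum_add_distrib]; gcongr; exact hcs m
    _ ≤ ∑ m, ∑ l ∈ s, ∑ y with θ < r m l y, w y * r m l y + √B * √M := by
        rw [sum_add_distrib, ← mul_sum]; gcongr

end ChangeOfMeasure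

section LikelihoodRatio

open Finset

variable {ι : Type*} [Fintype ι] (Q : X → Y → ℝ) (star : X)

def outputProb (σ : ι → X) (y : ι → Y) : ℝ := ∏ t, Q (σ t) (y t)

noncomputable def likelihoodRatio (σ : ι → X) (y : ι → Y) : ℝ := ∏ t, Q (σ t) (y t) / Q star (y t)

noncomputable def llr (x : X) (b : Y) : ℝ := Real.log (Q x b / Q star b)

noncomputable def llrVar [Fintype Y] (x : X) : ℝ :=
  ∑ b, Q x b * (llr Q star x b - klDivR (Q x) (Q star)) ^ 2

variable {Q star}

theorem llr_self (b : Y) : llr Q star star b = 0 := by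
  by_cases h : Q star b = 0 <;> simp [llr, h]

theorem klDivR_self [Fintype Y] : klDivR (Q star) (Q star) = 0 :=
  sum_eq_zero fun b _ => by rw [← llr, llr_self, mul_zero]

theorem llrVar_self [Fintype Y] : llrVar Q star star = 0 :=
  sum_eq_zero fun b _ => by rw [llr_self, klDivR_self]; ring

theorem llrVar_nonneg [Fintype X] [Fintype Y] (hQ : IsChannel Q) (x : X) : 0 ≤ llrVar Q star x :=
  sum_nonneg fun b _ => mul_nonneg ((hQ x).1 b) (sq_nonneg _)

theorem sum_mul_llr_sub_klDivR [Fintype X] [Fintype Y] (hQ : IsChannel Q) (x : X) :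
    ∑ b, Q x b * (llr Q star x b - klDivR (Q x) (Q star)) = 0 := by
  simp_rw [mul_sub, sum_sub_distrib, ← sum_mul, (hQ x).2, one_mul]
  exact sub_self _

theorem outputProb_nonneg [Fintype X] [Fintype Y] (hQ : IsChannel Q) (σ : ι → X) (y : ι → Y) :
    0 ≤ outputProb Q σ y :=
  prod_nonneg fun _ _ => (hQ _).1 _

theorem likelihoodRatio_nonneg [Fintype X] [Fintype Y] (hQ : IsChannel Q) (σ : ι → X)
    (y : ι → Y) : 0 ≤ likelihoodRatio Q star σ y :=
  prod_nonneg fun _ _ => div_nonneg ((hQ _).1 _) ((hQ _).1 _)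

theorem sum_outputProb [Fintype X] [Fintype Y] [DecidableEq ι] (hQ : IsChannel Q) (σ : ι → X) :
    ∑ y, outputProb Q σ y = 1 := by
  simpa [outputProb] using sum_prod_mul_prod_eq_prod_sum (fun t => Q (σ t)) (fun t => (hQ _).2) ∅
    fun _ _ => (1 : ℝ)

theorem outputProb_star_mul_likelihoodRatio (hstar : ∀ b, 0 < Q star b) (σ : ι → X)
    (y : ι → Y) :
    outputProb Q (fun _ => star) y * likelihoodRatio Q star σ y = outputProb Q σ y := by
  rw [outputProb, likelihoodRatio, ← prod_mul_distrib]
  exact prod_congr rfl fun t _ => mul_div_cancel₀ _ (hstar _).ne'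

/-- Only an inequality: where `Q (σ t) (y t) = 0`, the junk value `Real.log 0 = 0` enters `llr`. -/
theorem likelihoodRatio_le_exp_sum_llr [Fintype X] [Fintype Y] (hQ : IsChannel Q) (σ : ι → X)
    (y : ι → Y) : likelihoodRatio Q star σ y ≤ Real.exp (∑ t, llr Q star (σ t) (y t)) := by
  rw [Real.exp_sum]
  exact prod_le_prod (fun t _ => div_nonneg ((hQ _).1 _) ((hQ _).1 _))
    fun t _ => Real.le_exp_log _

theorem sum_outputProb_star_mul_likelihoodRatio_mul [Fintype X] [Fintype Y] [DecidableEq ι]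
    (hQ : IsChannel Q) (hstar : ∀ b, 0 < Q star b) {σ σ' : ι → X}
    (h : ∀ t, σ t = star ∨ σ' t = star) :
    ∑ y, outputProb Q (fun _ => star) y *
      (likelihoodRatio Q star σ y * likelihoodRatio Q star σ' y) = 1 := by
  classical
  have hpt : ∀ y, outputProb Q (fun _ => star) y *
      (likelihoodRatio Q star σ y * likelihoodRatio Q star σ' y)
      = outputProb Q (fun t => if σ t = star then σ' t else σ t) y := fun y => by
    simp only [outputProb, likelihoodRatio, ← prod_mul_distrib]
    refine prod_congr rfl fun t _ => ?_
    have := (hstar (y t)).ne'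
    rcases h t with h | h <;> split_ifs <;> simp_all <;> field_simp
  simp_rw [hpt]
  exact sum_outputProb hQ _

theorem sum_outputProb_filter_lt_likelihoodRatio_le [Fintype X] [Fintype Y] [DecidableEq ι]
    [DecidableEq X] (hQ : IsChannel Q) (σ : ι → X) {n : ℕ} (hn : 0 < n) (hσ : #{t | σ t ≠ star} ≤ n)
    {d κ : ℝ} (hd : ∀ x, klDivR (Q x) (Q star) ≤ d) (hκ : 0 < κ) :
    ∑ y with Real.exp ((d + κ) * n) < likelihoodRatio Q star σ y, outputProb Q σ y
      ≤ (∑ x, llrVar Q star x) / (κ ^ 2 * n) := by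
  set G : (ι → Y) → ℝ := fun y => ∑ t, llr Q star (σ t) (y t)
  set μ := ∑ t, klDivR (Q (σ t)) (Q star)
  have hμ : μ ≤ n * d :=
    sum_comp_le_of_card_ne_le σ star (f := fun x => klDivR (Q x) (Q star)) klDivR_self hd hσ
  have hvar : ∑ y, outputProb Q σ y * (G y - μ) ^ 2 ≤ n * ∑ x, llrVar Q star x := by
    have hsum : ∑ y, outputProb Q σ y * (G y - μ) ^ 2 = ∑ t, llrVar Q star (σ t) := by
      have hGμ : ∀ y, G y - μ = ∑ t, (llr Q star (σ t) (y t) - klDivR (Q (σ t)) (Q star)) :=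
        fun y => (sum_sub_distrib _ _).symm
      simp_rw [hGμ, outputProb, llrVar]
      exact sum_prod_mul_sq_sum_eq (fun t => Q (σ t)) (fun t => (hQ _).2)
        (fun t b => llr Q star (σ t) b - klDivR (Q (σ t)) (Q star))
        fun t => sum_mul_llr_sub_klDivR hQ (σ t)
    rw [hsum]
    exact sum_comp_le_of_card_ne_le σ star (f := llrVar Q star) llrVar_self
      (fun x => single_le_sum (fun x _ => llrVar_nonneg hQ x) (mem_univ x)) hσ
  have hsub : ∀ y ∈ univ, Real.exp ((d + κ) * n) < likelihoodRatio Q star σ y → (d + κ) * n < G y :=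
    fun y _ hy => Real.exp_lt_exp.mp (hy.trans_le (likelihoodRatio_le_exp_sum_llr hQ σ y))
  calc ∑ y with Real.exp ((d + κ) * n) < likelihoodRatio Q star σ y, outputProb Q σ y
      ≤ ∑ y with (d + κ) * n < G y, outputProb Q σ y :=
        sum_le_sum_of_subset_of_nonneg (monotone_filter_right _ hsub) fun y _ _ =>
          outputProb_nonneg hQ σ y
    _ ≤ (∑ y, outputProb Q σ y * (G y - μ) ^ 2) / (κ * n) ^ 2 :=
        sum_filter_lt_le_div_sq (outputProb_nonneg hQ σ) G (by positivity) (by linarith)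
    _ ≤ n * (∑ x, llrVar Q star x) / (κ * n) ^ 2 := by gcongr
    _ = (∑ x, llrVar Q star x) / (κ ^ 2 * n) := by field_simp

end LikelihoodRatio

section AsyncModel

open Finset

def inputSeq (star : X) {N : ℕ} (c : Fin N → X) (l : ℕ) {T : ℕ} (t : Fin T) : X :=
  if h : l ≤ (t : ℕ) + 1 ∧ (t : ℕ) + 1 < l + N then c ⟨(t : ℕ) + 1 - l, by omega⟩ else star

theorem seqProb_eq_outputProb (Q : X → Y → ℝ) (star : X) {N T : ℕ} (c : Fin N → X) (l : ℕ)
    (y : Fin T → Y) : seqProb Q star c l y = outputProb Q (inputSeq star c l) y :=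
  rfl

theorem card_inputSeq_ne_star_le [DecidableEq X] (star : X) {N : ℕ} (c : Fin N → X) (l T : ℕ) :
    #{t : Fin T | inputSeq star c l t ≠ star} ≤ N :=
  calc #{t : Fin T | inputSeq star c l t ≠ star} ≤ #(Ico (l - 1) (l - 1 + N)) := by
        refine card_le_card_of_injOn (fun t => (t : ℕ)) (fun t ht => ?_) Fin.val_injective.injOn
        have : l ≤ (t : ℕ) + 1 ∧ (t : ℕ) + 1 < l + N := by
          by_contra h
          exact (mem_filter.mp (mem_coe.mp ht)).2 (dif_neg h)
        simp only [coe_Ico, Set.mem_Ico]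
        omega
    _ = N := by simp

theorem inputSeq_eq_star_or_eq_star (star : X) {N : ℕ} (c : Fin N → X) {l l' : ℕ}
    (h : l + N ≤ l' ∨ l' + N ≤ l) {T : ℕ} (t : Fin T) :
    inputSeq star c l t = star ∨ inputSeq star c l' t = star := by
  unfold inputSeq
  split_ifs <;> first | omega | simp

theorem card_filter_window_overlap_le (N l A : ℕ) :
    #{l' ∈ Icc 1 A | l < l' + N ∧ l' < l + N} ≤ 2 * N :=
  calc #{l' ∈ Icc 1 A | l < l' + N ∧ l' < l + N} ≤ #(Ioo (l - N) (l + N)) :=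
        card_le_card fun l' h => by simp only [mem_filter, mem_Icc, mem_Ioo] at h ⊢; omega
    _ ≤ 2 * N := by simp only [Nat.card_Ioo]; omega

variable [Fintype X] [Fintype Y] {Q : X → Y → ℝ} {star : X}

theorem sum_outputProb_star_mul_sq_sum_min_le (hQ : IsChannel Q) (hstar : ∀ b, 0 < Q star b)
    {N : ℕ} (c : Fin N → X) (A T : ℕ) {θ : ℝ} (hθ : 0 ≤ θ) :
    ∑ y : Fin T → Y, outputProb Q (fun _ => star) y *
      (∑ l ∈ Icc 1 A, min (likelihoodRatio Q star (inputSeq star c l) y) θ) ^ 2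
      ≤ A * (A + 2 * N * θ) := by
  set w : (Fin T → Y) → ℝ := outputProb Q (fun _ => star)
  set r : ℕ → (Fin T → Y) → ℝ := fun l => likelihoodRatio Q star (inputSeq star c l)
  have hw : ∀ y, 0 ≤ w y := outputProb_nonneg hQ _
  have hr : ∀ l y, 0 ≤ r l y := fun l => likelihoodRatio_nonneg hQ _
  have hE : ∀ l, ∑ y, w y * r l y = 1 := fun l => by
    simp_rw [w, r, outputProb_star_mul_likelihoodRatio hstar]
    exact sum_outputProb hQ _
  have hfar : ∀ l l', ¬(l < l' + N ∧ l' < l + N) →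
      ∑ y, w y * (min (r l y) θ * min (r l' y) θ) ≤ 1 := fun l l' h =>
    calc ∑ y, w y * (min (r l y) θ * min (r l' y) θ) ≤ ∑ y, w y * (r l y * r l' y) :=
          sum_le_sum fun y _ => mul_le_mul_of_nonneg_left (mul_le_mul (min_le_left _ _)
            (min_le_left _ _) (le_min (hr l' y) hθ) (hr l y)) (hw y)
      _ = 1 := sum_outputProb_star_mul_likelihoodRatio_mul hQ hstar
          (inputSeq_eq_star_or_eq_star star c (by omega))
  have hnear : ∀ l l', ∑ y, w y * (min (r l y) θ * min (r l' y) θ) ≤ θ := fun l l' =>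
    calc ∑ y, w y * (min (r l y) θ * min (r l' y) θ) ≤ ∑ y, θ * (w y * r l' y) :=
          sum_le_sum fun y _ => by
            rw [mul_left_comm]
            exact mul_le_mul (min_le_right _ _)
              (mul_le_mul_of_nonneg_left (min_le_left _ _) (hw y))
              (mul_nonneg (hw y) (le_min (hr l' y) hθ)) hθ
      _ = θ := by rw [← mul_sum, hE, mul_one]
  simpa using sum_mul_sq_sum_le_of_almost_orthogonal (Icc 1 A) (fun l y => min (r l y) θ)
    (fun l l' => l < l' + N ∧ l' < l + N) hθ hfar hnear
    fun l _ => card_filter_window_overlap_le N l A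

end AsyncModel

section Converse

open Finset

variable [Fintype X] [Fintype Y] {Q : X → Y → ℝ} {star : X}

theorem sum_sum_sum_filter_eq_seqProb_le (hQ : IsChannel Q) (hstar : ∀ b, 0 < Q star b)
    {N M : ℕ} (hN : 0 < N) (c : Fin M → Fin N → X) (A : ℕ) (φ : (Fin (A + N - 1) → Y) → Fin M)
    {d κ : ℝ} (hd : ∀ x, klDivR (Q x) (Q star) ≤ d) (hκ : 0 < κ) :
    ∑ m, ∑ l ∈ Icc 1 A, ∑ y with φ y = m, seqProb Q star (c m) l y
      ≤ A * M * ((∑ x, llrVar Q star x) / (κ ^ 2 * N))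
        + √(A * (A + 2 * N * Real.exp ((d + κ) * N))) * √M := by
  classical
  set θ := Real.exp ((d + κ) * N)
  set w : (Fin (A + N - 1) → Y) → ℝ := outputProb Q (fun _ => star)
  set r : Fin M → ℕ → (Fin (A + N - 1) → Y) → ℝ :=
    fun m l => likelihoodRatio Q star (inputSeq star (c m) l)
  have hP : ∀ m l y, w y * r m l y = seqProb Q star (c m) l y := fun m l y =>
    outputProb_star_mul_likelihoodRatio hstar _ _
  have hcheb : ∀ m l, ∑ y with θ < r m l y, w y * r m l y
      ≤ (∑ x, llrVar Q star x) / (κ ^ 2 * N) := fun m l => by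
    simp_rw [hP, seqProb_eq_outputProb]
    exact sum_outputProb_filter_lt_likelihoodRatio_le hQ _ hN
      (card_inputSeq_ne_star_le star (c m) l _) hd hκ
  simp_rw [← hP]
  refine (sum_sum_sum_filter_eq_le_add_sqrt_mul_sqrt (θ := θ) (outputProb_nonneg hQ _)
    (sum_outputProb hQ _) φ (Icc 1 A) (fun m l => likelihoodRatio_nonneg hQ _)
    (Real.exp_pos _).le
    fun m => sum_outputProb_star_mul_sq_sum_min_le hQ hstar (c m) A _ (Real.exp_pos _).le).trans ?_
  gcongr
  calc ∑ m, ∑ l ∈ Icc 1 A, ∑ y with θ < r m l y, w y * r m l y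
      ≤ ∑ m : Fin M, ∑ l ∈ Icc 1 A, (∑ x, llrVar Q star x) / (κ ^ 2 * N) :=
        sum_le_sum fun m _ => sum_le_sum fun l _ => hcheb m l
    _ = A * M * ((∑ x, llrVar Q star x) / (κ ^ 2 * N)) := by simp; ring

theorem errProb_eq_one_sub (hQ : IsChannel Q) {N M : ℕ} (c : Fin M → Fin N → X) {A : ℕ}
    (hA : 0 < A) (hM : 0 < M) (dec : Decoder Y (A + N - 1) M) :
    errProb Q star c A dec
      = 1 - (∑ m, ∑ l ∈ Icc 1 A, ∑ y with dec.φ y = m, seqProb Q star (c m) l y) / (A * M) := by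
  have hinner : ∀ m l, ∑ y, (if dec.φ y = m then 0 else seqProb Q star (c m) l y)
      = 1 - ∑ y with dec.φ y = m, seqProb Q star (c m) l y := fun m l => by
    rw [sum_ite, sum_const_zero, zero_add, eq_sub_iff_add_eq, sum_filter_not_add_sum_filter]
    exact sum_outputProb hQ _
  simp_rw [errProb, hinner, sum_sub_distrib, sum_const, card_univ, Fintype.card_fin, Nat.card_Icc]
  rw [Nat.add_sub_cancel, nsmul_eq_mul, nsmul_eq_mul, mul_one]
  field_simp

theorem exists_lt_forall_klDivR_le (hstar : ∀ b, 0 < Q star b) {α : ℝ}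
    (hα : (⨆ x : X, klDiv (Q x) (Q star)) < ENNReal.ofReal α) :
    ∃ d < α, ∀ x, klDivR (Q x) (Q star) ≤ d := by
  have : Nonempty X := ⟨star⟩
  obtain ⟨x₀, hx₀⟩ := Finite.exists_max fun x => klDivR (Q x) (Q star)
  refine ⟨_, ?_, hx₀⟩
  have hlt := (le_iSup (fun x => klDiv (Q x) (Q star)) x₀).trans_lt hα
  rw [klDiv, if_pos fun b hb => absurd hb (hstar b).ne'] at hlt
  exact (ENNReal.ofReal_lt_ofReal_iff'.mp hlt).1

end Converse

theorem converse_general [Fintype X] [Fintype Y]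
    (Q : X → Y → ℝ) (star : X) (hQ : IsChannel Q)
    (hstar : ∀ y : Y, 0 < Q star y) (α : ℝ)
    (hα : (⨆ x : X, klDiv (Q x) (Q star)) < ENNReal.ofReal α) :
    ∃ δ : ℝ, 0 < δ ∧ ∃ N₀ : ℕ, ∀ N ≥ N₀, ∀ M : ℕ, 2 ≤ M →
      ∀ c : Fin M → Fin N → X, ∀ A : ℕ, Real.exp (α * N) ≤ (A : ℝ) →
        ∀ dec : Decoder Y (A + N - 1) M, δ ≤ errProb Q star c A dec := by
  obtain ⟨d, hdα, hd⟩ := exists_lt_forall_klDivR_le hstar hα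
  obtain ⟨κ, hκ, rfl⟩ : ∃ κ > 0, α = d + κ + κ := ⟨(α - d) / 2, by linarith, by ring⟩
  set V := ∑ x, llrVar Q star x
  have hsmall : ∀ᶠ N : ℕ in Filter.atTop, V / (κ ^ 2 * N) ≤ 1 / 8 :=
    ((tendsto_const_div_atTop_nhds_zero_nat (V / κ ^ 2)).eventually
      (ge_mem_nhds (by norm_num : (0 : ℝ) < 1 / 8))).mono fun N h => by rwa [div_div] at h
  obtain ⟨N₀, hN₀⟩ := Filter.eventually_atTop.mp ((Filter.eventually_gt_atTop 0).and
    (hsmall.and (tendsto_natCast_atTop_atTop.eventually (eventually_mul_le_exp_mul 16 hκ))))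
  refine ⟨1 / 8, by norm_num, N₀, fun N hN M hM c A hA dec => ?_⟩
  obtain ⟨hN, hVN, hNκ⟩ := hN₀ N hN
  have hθA : 2 * N * Real.exp ((d + κ) * N) ≤ A / 8 := by
    rw [add_mul, Real.exp_add] at hA
    nlinarith [Real.exp_pos ((d + κ) * N)]
  have hApos : 0 < A := by exact_mod_cast (Real.exp_pos _).trans_le hA
  rw [errProb_eq_one_sub hQ c hApos (by omega) dec, le_sub_comm, div_le_iff₀ (by positivity)]
  calc _ ≤ A * M * (V / (κ ^ 2 * N)) + √(A * (A + 2 * N * Real.exp ((d + κ) * N))) * √M :=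
        sum_sum_sum_filter_eq_seqProb_le hQ hstar hN c A dec.φ hd hκ
    _ ≤ A * M * (1 / 8) + 3 / 4 * (A * M) :=
        add_le_add (by gcongr) (sqrt_mul_add_mul_sqrt_le (by positivity) hθA (by exact_mod_cast hM))
    _ = (1 - 1 / 8) * (A * M) := by ring

/-- **Converse.** If `Q(y|⋆) > 0` for every `y`, then no coding strategy achieves an
asynchronism exponent strictly greater than `max_x D(Q(·|x)‖Q(·|⋆))`: for every
`α` exceeding this quantity there is a `δ > 0` such that for all sufficiently large
blocklengths `N`, every codebook with `M ≥ 2` codewords of length `N` and every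
sequential decoder operating at asynchronism level `A ≥ e^{αN}` has error
probability at least `δ`. -/
theorem converse [Fintype X] [Fintype Y] [Nonempty X]
    (Q : X → Y → ℝ) (star : X) (hQ : IsChannel Q)
    (hstar : ∀ y : Y, 0 < Q star y) (α : ℝ)
    (hα : (⨆ x : X, klDiv (Q x) (Q star)) < ENNReal.ofReal α) :
    ∃ δ : ℝ, 0 < δ ∧ ∃ N₀ : ℕ, ∀ N ≥ N₀, ∀ M : ℕ, 2 ≤ M →
      ∀ c : Fin M → Fin N → X, ∀ A : ℕ, Real.exp (α * N) ≤ (A : ℝ) →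
        ∀ dec : Decoder Y (A + N - 1) M, δ ≤ errProb Q star c A dec :=
  converse_general Q star hQ hstar α hα

end Async
end

section
/- (False-alarm bound.) Assume the codebook is randomly generated with all symbols of all codewords i.i.d. according to an input distribution P on 𝒳. There exists a polynomial p (depending only on |𝒳| and |𝒴|) such that for all threshold constants t₁, t₂ ∈ ℝ, all blocklengths N, all numbers of messages M ≥ 2, all asynchronism levels A ≥ 1, all messages m and starting times l: ∑_{m'≠m} ∑_{n=1}^{A+N−1} ∑_{i=1}^{min(N,n)} P_{m,l}(E(m',n,i)) ≤ p(N)·(M^{−(t₁+t₂−1)}·A + M^{−(t₂−1)}), where P_{m,l} averages over both the random codebook and the channel outputs when message m is sent starting at time l. -/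
/-! For `m' ≠ m` the codewords of `m` and `m'` are independent, so each term factorises into
the output law of the true codeword times the probability, over a fresh random codeword, of
`E(m',n,i)`. Taking `k = i` in that event gives `i·I(P̂) ≥ t₂ ln M`. By the method of types, the
i.i.d. weight of a codeword is at most `exp(-i·I(P̂))` times its conditional empirical
probability given the outputs, and summing these over the at most `(i+1)^{|𝒳||𝒴|}` joint types
gives the factor `(i+1)^{|𝒳||𝒴|} M^{-t₂}`. In the same way (Sanov), when the window
`[n-i+1, n]` contains only noise, which fails for at most `2N` values of `n`, the divergence
condition has probability at most `(i+1)^{|𝒴|} M^{-t₁}`. Summing over fewer than `M` messages,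
`A+N-1` times and `N` window lengths gives the bound. -/

open scoped BigOperators ENNReal

namespace Async

variable {X : Type*} {Y : Type*}

open scoped Classical in
/-- Real-valued indicator of a proposition. -/
noncomputable def ind (p : Prop) : ℝ := if p then 1 else 0

/-- Extension of a codeword to an `ℕ`-indexed sequence (`j`-th symbol is `c_{j+1}`). -/
def extX [Inhabited X] {N : ℕ} (c : Fin N → X) : ℕ → X :=
  fun j => if h : j < N then c ⟨j, h⟩ else default

/-- Extension of an output block to a time-indexed (`1`-based) sequence. -/
def extY [Inhabited Y] {T : ℕ} (y : Fin T → Y) : ℕ → Y :=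
  fun t => if h : t - 1 < T then y ⟨t - 1, h⟩ else default

open scoped Classical in
/-- Empirical joint distribution of the first `k` pairs of two sequences. -/
noncomputable def emp2 (k : ℕ) (x : ℕ → X) (y : ℕ → Y) : X × Y → ℝ :=
  fun p => (((Finset.range k).filter (fun j => x j = p.1 ∧ y j = p.2)).card : ℝ) / k

open scoped Classical in
/-- Empirical distribution of the first `k` entries of a sequence. -/
noncomputable def emp1 (k : ℕ) (y : ℕ → Y) : Y → ℝ :=
  fun b => (((Finset.range k).filter (fun j => y j = b)).card : ℝ) / k

/-- `e^{-x}` for `x ∈ [0,∞]` (equal to `0` at `x = ∞`). -/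
noncomputable def expNeg (x : ℝ≥0∞) : ℝ := if x = ⊤ then 0 else Real.exp (-x.toReal)

/-- Weight of a codebook whose symbols are i.i.d. according to `P`. -/
noncomputable def cbWeight [Fintype X] (P : X → ℝ) {M N : ℕ}
    (Cb : Fin M → Fin N → X) : ℝ :=
  ∏ μ : Fin M, ∏ j : Fin N, P (Cb μ j)

/-- The event `E(m,n,i) = ∩_{k=1}^{i} E(m,n,i,k)`: at time `n`, the last `i` output
symbols look sufficiently different from noise (divergence condition) and, for every
split point `k`, are sufficiently correlated with the codeword `c` of message `m`
(mutual information condition). Sequences are `1`-based in time; `c j` is the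
`(j+1)`-th codeword symbol. -/
noncomputable def EventE [Fintype X] [Fintype Y] (Q : X → Y → ℝ) (star : X)
    (t₁ t₂ : ℝ) (M : ℕ) (c : ℕ → X) (y : ℕ → Y) (n i : ℕ) : Prop :=
  (∀ k ∈ Finset.Icc 1 i,
      t₂ * Real.log M ≤
        (k : ℝ) * mi (emp2 k c (fun j => y (n - i + 1 + j)))
          + ((i - k : ℕ) : ℝ) *
            mi (emp2 (i - k) (fun j => c (k + j)) (fun j => y (n - i + k + 1 + j)))) ∧
  ENNReal.ofReal (t₁ * Real.log M) ≤
    (i : ℝ≥0∞) * klDiv (emp1 i (fun j => y (n - i + 1 + j))) (Q star)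

open Finset Real

theorem ind_nonneg (p : Prop) : 0 ≤ ind p := by
  unfold ind; split_ifs <;> norm_num

theorem ind_le_one (p : Prop) : ind p ≤ 1 := by
  unfold ind; split_ifs <;> norm_num

theorem ind_mono {p q : Prop} (h : p → q) : ind p ≤ ind q := by
  unfold ind; split_ifs <;> simp_all

theorem ind_and (p q : Prop) : ind (p ∧ q) = ind p * ind q := by
  unfold ind; split_ifs <;> simp_all

theorem sum_ind {ι : Type*} (s : Finset ι) (p : ι → Prop) [DecidablePred p] :
    ∑ i ∈ s, ind (p i) = #{i ∈ s | p i} := by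
  rw [card_filter, Nat.cast_sum]
  refine sum_congr rfl fun i _ => ?_
  unfold ind
  split_ifs <;> simp

theorem IsDist.sum_mul_le {A : Type*} [Fintype A] {μ : A → ℝ} (hμ : IsDist μ) {f : A → ℝ}
    {B : ℝ} (hf : ∀ a, f a ≤ B) : ∑ a, μ a * f a ≤ B :=
  calc ∑ a, μ a * f a ≤ ∑ a, μ a * B :=
        sum_le_sum fun a _ => mul_le_mul_of_nonneg_left (hf a) (hμ.1 a)
    _ = B := by rw [← sum_mul, hμ.2, one_mul]

theorem IsDist.pi {ι A : Type*} [Fintype ι] [DecidableEq ι] [Fintype A] {p : ι → A → ℝ}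
    (hp : ∀ t, IsDist (p t)) : IsDist fun f : ι → A => ∏ t, p t (f t) := by
  refine ⟨fun f => prod_nonneg fun t _ => (hp t).1 _, ?_⟩
  rw [← Fintype.prod_sum]
  exact prod_eq_one fun t _ => (hp t).2

theorem sum_pi_mul_mul_eq_mul {ι A : Type*} [Fintype ι] [DecidableEq ι] [Fintype A]
    {w : A → ℝ} (hw : ∑ a, w a = 1) {m m' : ι} (hmm' : m ≠ m') (g₁ g₂ : A → ℝ) :
    ∑ f : ι → A, (∏ μ, w (f μ)) * g₁ (f m) * g₂ (f m')
      = (∑ a, w a * g₁ a) * ∑ a, w a * g₂ a := by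
  set φ : ι → A → ℝ := fun μ a =>
    w a * (if μ = m then g₁ a else 1) * (if μ = m' then g₂ a else 1)
  have hφ : ∀ f : ι → A, (∏ μ, w (f μ)) * g₁ (f m) * g₂ (f m') = ∏ μ, φ μ (f μ) := by
    intro f
    simp only [φ, prod_mul_distrib, prod_ite_eq', mem_univ, if_true]
  have hsum : ∀ μ, ∑ a, φ μ a
      = (if μ = m then ∑ a, w a * g₁ a else 1) * (if μ = m' then ∑ a, w a * g₂ a else 1) := by
    intro μ
    by_cases h₁ : μ = m <;> by_cases h₂ : μ = m'
    · exact absurd (h₁.symm.trans h₂) hmm'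
    all_goals simp [φ, h₁, h₂, hw, hmm', hmm'.symm]
  simp_rw [hφ, ← Fintype.prod_sum, hsum, prod_mul_distrib, prod_ite_eq', mem_univ, if_true]

theorem le_exp_neg_mul_of_mul_exp_le {a b s θ : ℝ} (h : a * exp s ≤ b) (hb : 0 ≤ b)
    (hθ : θ ≤ s) : a ≤ exp (-θ) * b :=
  calc a = a * exp s * exp (-s) := by rw [mul_assoc, ← exp_add, add_neg_cancel, exp_zero, mul_one]
    _ ≤ b * exp (-θ) := mul_le_mul h (exp_le_exp.mpr (neg_le_neg hθ)) (exp_nonneg _) hb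
    _ = exp (-θ) * b := mul_comm _ _

section Empirical

variable {β : Type*}

theorem emp1_nonneg (k : ℕ) (u : ℕ → β) (b : β) : 0 ≤ emp1 k u b := by
  unfold emp1; positivity

theorem emp1_pos {k j : ℕ} (hj : j < k) (u : ℕ → β) : 0 < emp1 k u (u j) := by
  classical
  have : 0 < #{i ∈ range k | u i = u j} := card_pos.mpr ⟨j, by simp [hj]⟩
  unfold emp1
  have hk : 0 < k := by omega
  positivity

theorem exists_eq_of_emp1_ne_zero {k : ℕ} {u : ℕ → β} {b : β} (h : emp1 k u b ≠ 0) :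
    ∃ j < k, u j = b := by
  classical
  by_contra! hne
  exact h (by simp [emp1, filter_eq_empty_iff.mpr fun j hj => hne j (mem_range.mp hj)])

theorem natCast_mul_sum_emp1_mul [Fintype β] (k : ℕ) (u : ℕ → β) (g : β → ℝ) :
    (k : ℝ) * ∑ b, emp1 k u b * g b = ∑ j ∈ range k, g (u j) := by
  classical
  rcases Nat.eq_zero_or_pos k with rfl | hk
  · simp
  rw [← sum_fiberwise (range k) u (fun j => g (u j)), mul_sum]
  refine sum_congr rfl fun b _ => ?_
  rw [sum_eq_card_nsmul fun j hj => congrArg g (mem_filter.mp hj).2, nsmul_eq_mul, emp1]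
  field_simp

theorem sum_emp1 [Fintype β] {k : ℕ} (hk : 0 < k) (u : ℕ → β) : ∑ b, emp1 k u b = 1 := by
  have h := natCast_mul_sum_emp1_mul k u fun _ => 1
  simp only [mul_one, sum_const, card_range, nsmul_eq_mul] at h
  exact (mul_eq_left₀ (by positivity)).mp h

theorem exp_natCast_mul_sum_emp1_mul_log [Fintype β] {k : ℕ} {u : ℕ → β} {g : β → ℝ}
    (hg : ∀ j < k, 0 < g (u j)) :
    exp (k * ∑ b, emp1 k u b * log (g b)) = ∏ j ∈ range k, g (u j) := by
  rw [natCast_mul_sum_emp1_mul, exp_sum]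
  exact prod_congr rfl fun j hj => exp_log (hg j (mem_range.mp hj))

theorem prod_le_prod_emp1 [Fintype β] {P : β → ℝ} (hP0 : ∀ b, 0 ≤ P b)
    (hP1 : ∑ b, P b ≤ 1) (k : ℕ) (u : ℕ → β) :
    ∏ j ∈ range k, P (u j) ≤ ∏ j ∈ range k, emp1 k u (u j) := by
  rcases Nat.eq_zero_or_pos k with rfl | hk
  · simp
  have hT : ∀ j ∈ range k, 0 < emp1 k u (u j) := fun j hj => emp1_pos (mem_range.mp hj) u
  set z : ℕ → ℝ := fun j => P (u j) / emp1 k u (u j)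
  have hz0 : ∀ j ∈ range k, 0 ≤ z j := fun j hj => div_nonneg (hP0 _) (hT j hj).le
  have hamgm : ∏ j ∈ range k, z j ^ (k⁻¹ : ℝ) ≤ ∑ j ∈ range k, (k : ℝ)⁻¹ * z j :=
    geom_mean_le_arith_mean_weighted _ _ _ (fun _ _ => by positivity)
      (by simp [hk.ne']) hz0
  have hmean : ∑ j ∈ range k, (k : ℝ)⁻¹ * z j ≤ 1 := by
    rw [← mul_sum, ← natCast_mul_sum_emp1_mul k u fun b => P b / emp1 k u b,
      inv_mul_cancel_left₀ (by positivity)]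
    refine (sum_le_sum fun b _ => ?_).trans hP1
    rcases (emp1_nonneg k u b).eq_or_lt with h | h
    · rw [← h, zero_mul]; exact hP0 b
    · rw [mul_div_cancel₀ _ h.ne']
  have hprod : ∏ j ∈ range k, z j ≤ 1 := by
    rw [← rpow_inv_natCast_pow (prod_nonneg hz0) hk.ne', ← finsetProd_rpow _ _ hz0]
    exact pow_le_one₀ (prod_nonneg fun j hj => rpow_nonneg (hz0 j hj) _) (hamgm.trans hmean)
  calc ∏ j ∈ range k, P (u j) = (∏ j ∈ range k, z j) * ∏ j ∈ range k, emp1 k u (u j) := by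
        rw [← prod_mul_distrib]
        exact prod_congr rfl fun j hj => (div_mul_cancel₀ _ (hT j hj).ne').symm
    _ ≤ ∏ j ∈ range k, emp1 k u (u j) :=
        mul_le_of_le_one_left (prod_nonneg fun j hj => (hT j hj).le) hprod

theorem prod_le_exp_neg_mul_of_le_klDiv [Fintype β] {Q₀ : β → ℝ} (hQ₀ : IsDist Q₀)
    {k : ℕ} {w : ℕ → β} {θ : ℝ} (hθ : ENNReal.ofReal θ ≤ k * klDiv (emp1 k w) Q₀) :
    ∏ j ∈ range k, Q₀ (w j) ≤ exp (-θ) * ∏ j ∈ range k, emp1 k w (w j) := by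
  have hT : 0 ≤ ∏ j ∈ range k, emp1 k w (w j) := prod_nonneg fun _ _ => emp1_nonneg _ _ _
  by_cases hfin : ∀ b, Q₀ b = 0 → emp1 k w b = 0
  · have hQ : ∀ j < k, 0 < Q₀ (w j) := fun j hj =>
      (hQ₀.1 _).lt_of_ne' fun h0 => (emp1_pos hj w).ne' (hfin _ h0)
    rw [klDiv, if_pos hfin, ← ENNReal.ofReal_natCast, ← ENNReal.ofReal_mul (Nat.cast_nonneg k),
      ENNReal.ofReal_le_ofReal_iff'] at hθ
    rcases hθ with hθ | hθ
    · refine le_exp_neg_mul_of_mul_exp_le (le_of_eq ?_) hT hθ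
      rw [exp_natCast_mul_sum_emp1_mul_log (g := fun b => emp1 k w b / Q₀ b)
        fun j hj => div_pos (emp1_pos hj w) (hQ j hj), ← prod_mul_distrib]
      exact prod_congr rfl fun j hj => mul_div_cancel₀ _ (hQ j (mem_range.mp hj)).ne'
    · exact (prod_le_prod_emp1 hQ₀.1 hQ₀.2.le k w).trans
        (le_mul_of_one_le_left hT (one_le_exp (by linarith)))
  · obtain ⟨b, hb0, hb⟩ := not_forall₂.mp hfin
    obtain ⟨j, hj, rfl⟩ := exists_eq_of_emp1_ne_zero hb
    rw [prod_eq_zero (mem_range.mpr hj) hb0]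
    exact mul_nonneg (exp_nonneg _) hT

end Empirical

theorem emp2_eq_emp1 (k : ℕ) (x : ℕ → X) (y : ℕ → Y) :
    emp2 k x y = emp1 k fun j => (x j, y j) := by
  ext p
  unfold emp2 emp1
  congr 3
  ext j
  simp [Prod.ext_iff]

theorem margX_emp2 [Fintype Y] (k : ℕ) (x : ℕ → X) (y : ℕ → Y) :
    margX (emp2 k x y) = emp1 k x := by
  classical
  ext a
  simp only [margX, emp2, emp1, ← sum_div, ← Nat.cast_sum]
  rw [card_eq_sum_card_fiberwise (f := y) (t := univ) fun j _ => mem_coe.2 (mem_univ _)]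
  simp only [filter_filter]

theorem margY_emp2 [Fintype X] (k : ℕ) (x : ℕ → X) (y : ℕ → Y) :
    margY (emp2 k x y) = emp1 k y := by
  classical
  ext b
  simp only [margY, emp2, emp1, ← sum_div, ← Nat.cast_sum]
  rw [card_eq_sum_card_fiberwise (f := x) (t := univ) fun j _ => mem_coe.2 (mem_univ _)]
  simp only [filter_filter, and_comm]

theorem exp_natCast_mul_mi_emp2 [Fintype X] [Fintype Y] (k : ℕ) (x : ℕ → X) (w : ℕ → Y) :
    exp (k * mi (emp2 k x w))
      = ∏ j ∈ range k, emp2 k x w (x j, w j) / (emp1 k x (x j) * emp1 k w (w j)) := by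
  have h := exp_natCast_mul_sum_emp1_mul_log (k := k) (u := fun j => (x j, w j))
    (g := fun p => emp2 k x w p / (emp1 k x p.1 * emp1 k w p.2)) fun j hj => by
      have := emp1_pos hj x
      have := emp1_pos hj w
      have := emp1_pos hj fun j => (x j, w j)
      rw [emp2_eq_emp1]
      positivity
  rw [← emp2_eq_emp1] at h
  rw [mi, margX_emp2, margY_emp2, h]

theorem prod_le_exp_neg_mul_of_le_mi [Fintype X] [Fintype Y] {P : X → ℝ} (hP0 : ∀ a, 0 ≤ P a)
    (hP1 : ∑ a, P a ≤ 1) {k : ℕ} {x : ℕ → X} {w : ℕ → Y} {θ : ℝ}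
    (hθ : θ ≤ k * mi (emp2 k x w)) :
    ∏ j ∈ range k, P (x j)
      ≤ exp (-θ) * ∏ j ∈ range k, emp2 k x w (x j, w j) / emp1 k w (w j) := by
  have hcond : (∏ j ∈ range k, emp1 k x (x j)) * exp (k * mi (emp2 k x w))
      = ∏ j ∈ range k, emp2 k x w (x j, w j) / emp1 k w (w j) := by
    rw [exp_natCast_mul_mi_emp2, ← prod_mul_distrib]
    refine prod_congr rfl fun j hj => ?_
    have := (emp1_pos (mem_range.mp hj) x).ne'
    field_simp
  have hnonneg : 0 ≤ ∏ j ∈ range k, emp2 k x w (x j, w j) / emp1 k w (w j) :=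
    prod_nonneg fun j _ => div_nonneg (emp2_eq_emp1 k x w ▸ emp1_nonneg _ _ _) (emp1_nonneg _ _ _)
  refine le_exp_neg_mul_of_mul_exp_le (hcond ▸ ?_) hnonneg hθ
  exact mul_le_mul_of_nonneg_right (prod_le_prod_emp1 hP0 hP1 k x) (exp_nonneg _)

section Types

variable {β : Type*}

open scoped Classical in
/-- The type of `u₀, …, u_{k-1}` as its vector of symbol counts; the codomain `Fin (k + 1)` makes
the number of types `(k + 1) ^ card β`. -/
noncomputable def typeCount (k : ℕ) (u : ℕ → β) (b : β) : Fin (k + 1) :=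
  ⟨#{j ∈ range k | u j = b}, Nat.lt_succ_of_le ((card_filter_le _ _).trans (card_range k).le)⟩

noncomputable def typeDist [Fintype β] {k : ℕ} (κ : β → Fin (k + 1)) (b : β) : ℝ :=
  ((κ b : ℕ) : ℝ) / ∑ b', ((κ b' : ℕ) : ℝ)

theorem typeDist_nonneg [Fintype β] {k : ℕ} (κ : β → Fin (k + 1)) (b : β) :
    0 ≤ typeDist κ b := by
  unfold typeDist; positivity

theorem sum_typeDist_le_one [Fintype β] {k : ℕ} (κ : β → Fin (k + 1)) :
    ∑ b, typeDist κ b ≤ 1 := by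
  simp only [typeDist, ← sum_div]
  exact div_self_le_one _

theorem natCast_typeCount (k : ℕ) (u : ℕ → β) (b : β) :
    ((typeCount k u b : ℕ) : ℝ) = k * emp1 k u b := by
  rcases Nat.eq_zero_or_pos k with rfl | hk
  · simp [typeCount]
  simp only [typeCount, emp1]
  field_simp

theorem typeDist_typeCount [Fintype β] (k : ℕ) (u : ℕ → β) (b : β) :
    typeDist (typeCount k u) b = emp1 k u b := by
  rcases Nat.eq_zero_or_pos k with rfl | hk
  · simp [typeDist, typeCount, emp1]
  simp only [typeDist, natCast_typeCount, ← mul_sum, sum_emp1 hk, mul_one]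
  field_simp

theorem typeDist_typeCount_prod [Fintype X] [Fintype Y] {k : ℕ} (hk : 0 < k) (x : ℕ → X)
    (w : ℕ → Y) (a : X) (b : Y) :
    typeDist (fun a' => typeCount k (fun j => (x j, w j)) (a', b)) a
      = emp2 k x w (a, b) / emp1 k w b := by
  simp only [typeDist, natCast_typeCount, ← mul_sum, ← emp2_eq_emp1]
  rw [← margY_emp2 k x w, margY, mul_div_mul_left _ _ (by positivity)]

end Types

theorem sum_le_mul_card_of_le_mul_prod {ι α K : Type*} [Fintype ι] [DecidableEq ι] [Fintype α]
    [Fintype K] {F : (ι → α) → ℝ} (τ : (ι → α) → K) {h : K → ι → α → ℝ}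
    (hh0 : ∀ κ t a, 0 ≤ h κ t a) (hh1 : ∀ κ t, ∑ a, h κ t a ≤ 1) {C : ℝ} (hC : 0 ≤ C)
    (hF : ∀ f, F f ≤ C * ∏ t, h (τ f) t (f t)) :
    ∑ f, F f ≤ C * Fintype.card K :=
  calc ∑ f, F f ≤ ∑ f, ∑ κ, C * ∏ t, h κ t (f t) :=
        sum_le_sum fun f _ => (hF f).trans <| single_le_sum (f := fun κ => C * ∏ t, h κ t (f t))
          (fun κ _ => mul_nonneg hC (prod_nonneg fun t _ => hh0 κ t _)) (mem_univ (τ f))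
    _ = ∑ κ, C * ∏ t, ∑ a, h κ t a := by
        rw [sum_comm]
        exact sum_congr rfl fun κ _ => by rw [← mul_sum, Fintype.prod_sum]
    _ ≤ ∑ _κ : K, C := sum_le_sum fun κ _ => mul_le_of_le_one_right hC <|
        prod_le_one (fun t _ => sum_nonneg fun a _ => hh0 κ t a) fun t _ => hh1 κ t
    _ = C * Fintype.card K := by simp [mul_comm]

theorem sum_prod_mul_le_mul_card {ι α K : Type*} [Fintype ι] [DecidableEq ι] [Fintype α]
    [Fintype K] {p : ι → α → ℝ} (hp : ∀ t, IsDist (p t)) (S : Finset ι) {G : (ι → α) → ℝ}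
    (τ : (ι → α) → K) {q : K → ι → α → ℝ} (hq0 : ∀ κ t a, 0 ≤ q κ t a)
    (hq1 : ∀ κ t, ∑ a, q κ t a ≤ 1) {C : ℝ} (hC : 0 ≤ C)
    (hG : ∀ f, (∏ t ∈ S, p t (f t)) * G f ≤ C * ∏ t ∈ S, q (τ f) t (f t)) :
    ∑ f, (∏ t, p t (f t)) * G f ≤ C * Fintype.card K := by
  refine sum_le_mul_card_of_le_mul_prod τ (h := fun κ t a => if t ∈ S then q κ t a else p t a)
    (fun κ t a => by split_ifs; exacts [hq0 κ t a, (hp t).1 a])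
    (fun κ t => by split_ifs; exacts [hq1 κ t, (hp t).2.le]) hC fun f => ?_
  have hout : 0 ≤ ∏ t ∈ Sᶜ, p t (f t) := prod_nonneg fun t _ => (hp t).1 _
  rw [← prod_mul_prod_compl S, ← prod_mul_prod_compl S, prod_congr rfl fun t ht => if_pos ht,
    prod_congr rfl fun t ht => if_neg (mem_compl.mp ht)]
  calc (∏ t ∈ S, p t (f t)) * (∏ t ∈ Sᶜ, p t (f t)) * G f
      = (∏ t ∈ S, p t (f t)) * G f * ∏ t ∈ Sᶜ, p t (f t) := by ring
    _ ≤ C * (∏ t ∈ S, q (τ f) t (f t)) * ∏ t ∈ Sᶜ, p t (f t) :=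
        mul_le_mul_of_nonneg_right (hG f) hout
    _ = C * ((∏ t ∈ S, q (τ f) t (f t)) * ∏ t ∈ Sᶜ, p t (f t)) := by ring

theorem prod_filter_fin_eq_prod_range {M : Type*} [CommMonoid M] {T a b : ℕ} (hbT : b ≤ T)
    (f : ℕ → M) :
    ∏ t ∈ univ.filter (fun t : Fin T => a ≤ (t : ℕ) ∧ (t : ℕ) < b), f t
      = ∏ j ∈ range (b - a), f (a + j) := by
  rw [prod_filter, Fin.prod_univ_eq_prod_range (fun t => if a ≤ t ∧ t < b then f t else 1),
    ← prod_filter, ← prod_Ico_eq_prod_range]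
  congr 1
  ext t
  simp only [mem_filter, mem_range, mem_Ico]
  omega

theorem extX_coe [Inhabited X] {N : ℕ} (c : Fin N → X) (t : Fin N) : extX c t = c t := by
  simp [extX]

theorem extY_coe_add_one [Inhabited Y] {T : ℕ} (y : Fin T → Y) (t : Fin T) :
    extY y (t + 1) = y t := by
  simp [extY]

theorem sum_prod_mul_ind_le_mi_le [Fintype X] [Fintype Y] [Inhabited X] {P : X → ℝ}
    (hP : IsDist P) (w : ℕ → Y) (θ : ℝ) {i N : ℕ} (hi : 0 < i) (hiN : i ≤ N) :
    ∑ c : Fin N → X, (∏ j, P (c j)) * ind (θ ≤ i * mi (emp2 i (extX c) w))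
      ≤ exp (-θ) * ((i : ℝ) + 1) ^ (Fintype.card X * Fintype.card Y) := by
  classical
  have hcard : (Fintype.card (X × Y → Fin (i + 1)) : ℝ)
      = ((i : ℝ) + 1) ^ (Fintype.card X * Fintype.card Y) := by
    simp [Fintype.card_prod]
  rw [← hcard]
  -- inside the window, compare with the conditional type of the codeword given `w`
  refine sum_prod_mul_le_mul_card (fun _ => hP)
    (univ.filter fun t : Fin N => 0 ≤ (t : ℕ) ∧ (t : ℕ) < i)
    (fun c => typeCount i fun j => (extX c j, w j)) (q := fun κ t => typeDist fun a => κ (a, w t))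
    (fun _ _ _ => typeDist_nonneg _ _) (fun _ _ => sum_typeDist_le_one _) (exp_nonneg _)
    fun c => ?_
  by_cases hev : θ ≤ i * mi (emp2 i (extX c) w)
  · simp only [ind, if_pos hev, mul_one, ← extX_coe c]
    rw [prod_filter_fin_eq_prod_range hiN fun t => P (extX c t),
      prod_filter_fin_eq_prod_range hiN fun t =>
        typeDist (fun a => typeCount i (fun j => (extX c j, w j)) (a, w t)) (extX c t)]
    simp only [Nat.sub_zero, zero_add, typeDist_typeCount_prod hi]
    exact prod_le_exp_neg_mul_of_le_mi hP.1 hP.2.le hev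
  · simp only [ind, if_neg hev, mul_zero]
    exact mul_nonneg (exp_nonneg _) (prod_nonneg fun _ _ => typeDist_nonneg _ _)

theorem sum_prod_mul_ind_le_klDiv_le [Fintype Y] [Inhabited Y] {T : ℕ} {p : Fin T → Y → ℝ}
    (hp : ∀ t, IsDist (p t)) {Q₀ : Y → ℝ} (hQ₀ : IsDist Q₀) {n i : ℕ} (hin : i ≤ n)
    (hnT : n ≤ T) (hwin : ∀ t : Fin T, n - i ≤ (t : ℕ) → (t : ℕ) < n → p t = Q₀) (θ : ℝ) :
    ∑ y : Fin T → Y, (∏ t, p t (y t)) *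
        ind (ENNReal.ofReal θ ≤ i * klDiv (emp1 i fun j => extY y (n - i + 1 + j)) Q₀)
      ≤ exp (-θ) * ((i : ℝ) + 1) ^ Fintype.card Y := by
  classical
  have hcard : (Fintype.card (Y → Fin (i + 1)) : ℝ) = ((i : ℝ) + 1) ^ Fintype.card Y := by
    simp
  rw [← hcard]
  refine sum_prod_mul_le_mul_card hp (univ.filter fun t : Fin T => n - i ≤ (t : ℕ) ∧ (t : ℕ) < n)
    (fun y => typeCount i fun j => extY y (n - i + 1 + j)) (q := fun κ _ => typeDist κ)
    (fun _ _ _ => typeDist_nonneg _ _) (fun _ _ => sum_typeDist_le_one _) (exp_nonneg _)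
    fun y => ?_
  by_cases hev : ENNReal.ofReal θ ≤ i * klDiv (emp1 i fun j => extY y (n - i + 1 + j)) Q₀
  · have hshift : ∀ j, n - i + j + 1 = n - i + 1 + j := fun j => by omega
    rw [prod_congr rfl fun t ht => by rw [hwin t (mem_filter.mp ht).2.1 (mem_filter.mp ht).2.2]]
    simp only [ind, if_pos hev, mul_one, typeDist_typeCount, ← extY_coe_add_one y]
    rw [prod_filter_fin_eq_prod_range hnT fun t => Q₀ (extY y (t + 1)),
      prod_filter_fin_eq_prod_range hnT fun t =>
        emp1 i (fun j => extY y (n - i + 1 + j)) (extY y (t + 1))]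
    simp only [Nat.sub_sub_self hin, hshift]
    exact prod_le_exp_neg_mul_of_le_klDiv hQ₀ hev
  · simp only [ind, if_neg hev, mul_zero]
    exact mul_nonneg (exp_nonneg _) (prod_nonneg fun _ _ => typeDist_nonneg _ _)

theorem sum_seqProb_mul_ind_le_klDiv_le [Fintype X] [Fintype Y] [Inhabited Y] {Q : X → Y → ℝ}
    (hQ : IsChannel Q) (star : X) {N T : ℕ} (c : Fin N → X) (l : ℕ) {n i : ℕ} (hin : i ≤ n)
    (hnT : n ≤ T) (θ : ℝ) :
    ∑ y : Fin T → Y, seqProb Q star c l y *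
        ind (ENNReal.ofReal θ ≤ i * klDiv (emp1 i fun j => extY y (n - i + 1 + j)) (Q star))
      ≤ exp (-θ) * ((i : ℝ) + 1) ^ Fintype.card Y + ind (l ≤ n ∧ n < l + N + i) := by
  by_cases hov : l ≤ n ∧ n < l + N + i
  · have hseq : IsDist (seqProb Q star c l : (Fin T → Y) → ℝ) := IsDist.pi fun _ => hQ _
    rw [ind, if_pos hov]
    exact (hseq.sum_mul_le fun _ => ind_le_one _).trans (le_add_of_nonneg_left (by positivity))
  · refine le_add_of_le_of_nonneg ?_ (ind_nonneg _)
    refine sum_prod_mul_ind_le_klDiv_le (fun _ => hQ _) (hQ star) hin hnT (fun t h₁ h₂ => ?_) θ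
    rw [dif_neg (by omega)]

theorem sum_prod_mul_ind_eventE_le [Fintype X] [Fintype Y] [Inhabited X] [Inhabited Y]
    {Q : X → Y → ℝ} (star : X) {P : X → ℝ} (hP : IsDist P) (t₁ t₂ : ℝ) {M N T : ℕ}
    (y : Fin T → Y) {n i : ℕ} (hi : 0 < i) (hiN : i ≤ N) :
    ∑ c : Fin N → X, (∏ j, P (c j)) * ind (EventE Q star t₁ t₂ M (extX c) (extY y) n i)
      ≤ exp (-(t₂ * log M)) * ((i : ℝ) + 1) ^ (Fintype.card X * Fintype.card Y) *
          ind (ENNReal.ofReal (t₁ * log M)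
            ≤ i * klDiv (emp1 i fun j => extY y (n - i + 1 + j)) (Q star)) := by
  set w := fun j => extY y (n - i + 1 + j)
  calc ∑ c : Fin N → X, (∏ j, P (c j)) * ind (EventE Q star t₁ t₂ M (extX c) (extY y) n i)
      ≤ ∑ c : Fin N → X, (∏ j, P (c j)) * ind (t₂ * log M ≤ i * mi (emp2 i (extX c) w)) *
          ind (ENNReal.ofReal (t₁ * log M) ≤ i * klDiv (emp1 i w) (Q star)) := by
        refine sum_le_sum fun c _ => ?_
        rw [mul_assoc, ← ind_and]
        refine mul_le_mul_of_nonneg_left (ind_mono fun hE => ⟨?_, hE.2⟩)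
          (prod_nonneg fun j _ => hP.1 _)
        simpa using hE.1 i (mem_Icc.mpr ⟨hi, le_rfl⟩)
    _ ≤ _ := by
        rw [← sum_mul]
        exact mul_le_mul_of_nonneg_right (sum_prod_mul_ind_le_mi_le hP w _ hi hiN) (ind_nonneg _)

theorem sum_codebook_mul_ind_eventE_le [Fintype X] [Fintype Y] [Inhabited X] [Inhabited Y]
    {Q : X → Y → ℝ} (hQ : IsChannel Q) (star : X) {P : X → ℝ} (hP : IsDist P) (t₁ t₂ : ℝ)
    {M N T : ℕ} {m m' : Fin M} (hmm' : m ≠ m') (l : ℕ) {n i : ℕ} (hi : 0 < i) (hiN : i ≤ N)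
    (hin : i ≤ n) (hnT : n ≤ T) :
    ∑ Cb : Fin M → Fin N → X, ∑ y : Fin T → Y, cbWeight P Cb * seqProb Q star (Cb m) l y *
        ind (EventE Q star t₁ t₂ M (extX (Cb m')) (extY y) n i)
      ≤ exp (-(t₂ * log M)) * ((N : ℝ) + 1) ^ (Fintype.card X * Fintype.card Y) *
          (exp (-(t₁ * log M)) * ((N : ℝ) + 1) ^ Fintype.card Y
            + ind (l ≤ n ∧ n < l + 2 * N)) := by
  classical
  set w : (Fin N → X) → ℝ := fun c => ∏ j, P (c j)
  have hw : IsDist w := IsDist.pi fun _ => hP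
  set D : (Fin T → Y) → ℝ := fun y => ind (ENNReal.ofReal (t₁ * log M)
    ≤ i * klDiv (emp1 i fun j => extY y (n - i + 1 + j)) (Q star))
  have hiN' : (i : ℝ) + 1 ≤ N + 1 := by gcongr
  calc _ = ∑ y : Fin T → Y, (∑ c, w c * seqProb Q star c l y) *
          ∑ c, w c * ind (EventE Q star t₁ t₂ M (extX c) (extY y) n i) := by
        rw [sum_comm]
        exact sum_congr rfl fun y _ => sum_pi_mul_mul_eq_mul hw.2 hmm'
          (fun c => seqProb Q star c l y) fun c => ind (EventE Q star t₁ t₂ M (extX c) (extY y) n i)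
    _ ≤ ∑ y : Fin T → Y, (∑ c, w c * seqProb Q star c l y) *
          (exp (-(t₂ * log M)) * ((i : ℝ) + 1) ^ (Fintype.card X * Fintype.card Y) * D y) :=
        sum_le_sum fun y _ => mul_le_mul_of_nonneg_left
          (sum_prod_mul_ind_eventE_le star hP t₁ t₂ y hi hiN)
          (sum_nonneg fun c _ => mul_nonneg (hw.1 c) ((IsDist.pi fun _ => hQ _).1 _))
    _ = exp (-(t₂ * log M)) * ((i : ℝ) + 1) ^ (Fintype.card X * Fintype.card Y) *
          ∑ c, w c * ∑ y : Fin T → Y, seqProb Q star c l y * D y := by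
        simp_rw [mul_sum, sum_mul]
        rw [sum_comm]
        exact sum_congr rfl fun c _ => sum_congr rfl fun y _ => by ring
    _ ≤ exp (-(t₂ * log M)) * ((i : ℝ) + 1) ^ (Fintype.card X * Fintype.card Y) *
          (exp (-(t₁ * log M)) * ((i : ℝ) + 1) ^ Fintype.card Y + ind (l ≤ n ∧ n < l + N + i)) :=
        mul_le_mul_of_nonneg_left
          (hw.sum_mul_le fun c => sum_seqProb_mul_ind_le_klDiv_le hQ star c l hin hnT _)
          (by positivity)
    _ ≤ _ := by
        gcongr
        · exact add_nonneg (by positivity) (ind_nonneg _)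
        · exact ind_mono fun h => ⟨h.1, by omega⟩

theorem sum_erase_sum_Icc_sum_Icc_le {M : ℕ} (m : Fin M) (N T l : ℕ) {c₁ c₂ : ℝ}
    (hc₁ : 0 ≤ c₁) (hc₂ : 0 ≤ c₂) :
    ∑ _m' ∈ univ.erase m, ∑ n ∈ Icc 1 T, ∑ _i ∈ Icc 1 (min N n),
        (c₁ + c₂ * ind (l ≤ n ∧ n < l + 2 * N))
      ≤ M * (N * (T * c₁ + 2 * N * c₂)) := by
  have hwindow : ∑ n ∈ Icc 1 T, ind (l ≤ n ∧ n < l + 2 * N) ≤ 2 * N := by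
    rw [sum_ind]
    exact_mod_cast (card_le_card fun n hn => mem_Ico.mpr (mem_filter.mp hn).2).trans
      (by simp : #(Ico l (l + 2 * N)) ≤ 2 * N)
  have hinner : ∀ n, ∑ _i ∈ Icc 1 (min N n), (c₁ + c₂ * ind (l ≤ n ∧ n < l + 2 * N))
      ≤ N * (c₁ + c₂ * ind (l ≤ n ∧ n < l + 2 * N)) := fun n => by
    rw [sum_const, Nat.card_Icc, nsmul_eq_mul]
    exact mul_le_mul_of_nonneg_right (by exact_mod_cast (by omega : min N n + 1 - 1 ≤ N))
      (add_nonneg hc₁ (mul_nonneg hc₂ (ind_nonneg _)))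
  calc _ ≤ ∑ _m' ∈ univ.erase m, ∑ n ∈ Icc 1 T, N * (c₁ + c₂ * ind (l ≤ n ∧ n < l + 2 * N)) :=
        sum_le_sum fun _ _ => sum_le_sum fun n _ => hinner n
    _ = (M - 1 : ℕ) * (N * (T * c₁ + c₂ * ∑ n ∈ Icc 1 T, ind (l ≤ n ∧ n < l + 2 * N))) := by
        rw [sum_const, card_erase_of_mem (mem_univ m), card_univ, Fintype.card_fin, nsmul_eq_mul,
          ← mul_sum, sum_add_distrib, sum_const, Nat.card_Icc, ← mul_sum, nsmul_eq_mul]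
        simp
    _ ≤ M * (N * (T * c₁ + c₂ * (2 * N))) := by
        gcongr
        · exact mul_nonneg (Nat.cast_nonneg _) (add_nonneg (by positivity)
            (mul_nonneg hc₂ (sum_nonneg fun _ _ => ind_nonneg _)))
        · omega
    _ = M * (N * (T * c₁ + 2 * N * c₂)) := by ring

theorem natCast_mul_exp_neg_mul_log {M : ℕ} (hM : 0 < M) (t : ℝ) :
    (M : ℝ) * exp (-(t * log M)) = (M : ℝ) ^ (-(t - 1)) := by
  rw [rpow_def_of_pos (by positivity), show log M * -(t - 1) = log M + -(t * log M) by ring,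
    exp_add, exp_log (by positivity)]

theorem false_alarm_arith {M N A : ℕ} (hM : 0 < M) (hN : 1 ≤ N) (hA : 1 ≤ A) (t₁ t₂ : ℝ)
    (a b : ℕ) :
    (M : ℝ) * (N * (((A + N - 1 : ℕ) : ℝ) *
        (exp (-(t₂ * log M)) * ((N : ℝ) + 1) ^ a * (exp (-(t₁ * log M)) * ((N : ℝ) + 1) ^ b))
        + 2 * N * (exp (-(t₂ * log M)) * ((N : ℝ) + 1) ^ a)))
      ≤ 2 * ((N : ℝ) + 1) ^ (a + b + 2) *
          ((M : ℝ) ^ (-(t₁ + t₂ - 1)) * A + (M : ℝ) ^ (-(t₂ - 1))) := by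
  set u : ℝ := (N : ℝ) + 1
  set E₁ := exp (-(t₁ * log M))
  set E₂ := exp (-(t₂ * log M))
  have hN' : (1 : ℝ) ≤ N := by exact_mod_cast hN
  have hA' : (1 : ℝ) ≤ A := by exact_mod_cast hA
  have hT : ((A + N - 1 : ℕ) : ℝ) ≤ A * N := by
    rw [Nat.cast_sub (by omega), Nat.cast_add, Nat.cast_one]
    nlinarith [mul_nonneg (sub_nonneg.2 hA') (sub_nonneg.2 hN')]
  have hu : (N : ℝ) ^ 2 ≤ u ^ 2 := by gcongr; linarith
  have hua : u ^ a ≤ u ^ (a + b) := pow_le_pow_right₀ (by linarith) (by omega)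
  have e₁ : (M : ℝ) * (E₂ * E₁) = (M : ℝ) ^ (-(t₁ + t₂ - 1)) := by
    rw [← exp_add, ← natCast_mul_exp_neg_mul_log hM]
    ring_nf
  have e₂ : (M : ℝ) * E₂ = (M : ℝ) ^ (-(t₂ - 1)) := natCast_mul_exp_neg_mul_log hM t₂
  have h₁ : N * ((A + N - 1 : ℕ) : ℝ) * u ^ (a + b) ≤ 2 * u ^ (a + b + 2) * A := by
    calc N * ((A + N - 1 : ℕ) : ℝ) * u ^ (a + b) ≤ A * N ^ 2 * u ^ (a + b) := by
          gcongr ?_ * _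
          nlinarith [mul_le_mul_of_nonneg_left hT (by linarith : (0 : ℝ) ≤ N)]
      _ ≤ A * u ^ 2 * u ^ (a + b) := by gcongr
      _ ≤ 2 * u ^ (a + b + 2) * A := by
          have : 0 ≤ A * u ^ 2 * u ^ (a + b) := by positivity
          rw [pow_add u _ 2]
          linear_combination this
  have h₂ : 2 * N ^ 2 * u ^ a ≤ 2 * u ^ (a + b + 2) := by
    have := mul_le_mul hu hua (by positivity) (by positivity)
    rw [pow_add u _ 2]
    linear_combination 2 * this
  calc _ = (M : ℝ) * (E₂ * E₁) * (N * ((A + N - 1 : ℕ) : ℝ) * u ^ (a + b))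
        + (M : ℝ) * E₂ * (2 * N ^ 2 * u ^ a) := by ring
    _ ≤ (M : ℝ) ^ (-(t₁ + t₂ - 1)) * (2 * u ^ (a + b + 2) * A)
        + (M : ℝ) ^ (-(t₂ - 1)) * (2 * u ^ (a + b + 2)) := by
        rw [e₁, e₂]
        gcongr
    _ = _ := by ring

/-- **Lemma (false-alarm).** With the codebook randomly generated so that every symbol
of every codeword is i.i.d. `P`, there is a polynomial (here `K·(N+1)^d`, depending
only on the alphabet sizes) such that for all thresholds `t₁, t₂ ∈ ℝ`, all `N`,
`M ≥ 2`, asynchronism levels `A ≥ 1`, messages `m` and starting times `l`: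
`∑_{m'≠m} ∑_{n=1}^{A+N-1} ∑_{i=1}^{N∧n} P_{m,l}(E(m',n,i))
  ≤ poly(N) (M^{-(t₁+t₂-1)} A + M^{-(t₂-1)})`. -/
theorem false_alarm_bound [Fintype X] [Fintype Y] [Inhabited X] [Inhabited Y] :
    ∃ (d : ℕ) (K : ℝ), 0 < K ∧
      ∀ (Q : X → Y → ℝ) (star : X), IsChannel Q →
      ∀ (P : X → ℝ), IsDist P →
      ∀ (t₁ t₂ : ℝ) (N M A : ℕ), 1 ≤ N → 2 ≤ M → 1 ≤ A →
      ∀ (m : Fin M) (l : ℕ),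
      (∑ m' ∈ Finset.univ.erase m, ∑ n ∈ Finset.Icc 1 (A + N - 1),
          ∑ i ∈ Finset.Icc 1 (min N n),
          ∑ Cb : Fin M → Fin N → X, ∑ y : Fin (A + N - 1) → Y,
            cbWeight P Cb * seqProb Q star (Cb m) l y *
              ind (EventE Q star t₁ t₂ M (extX (Cb m')) (extY y) n i))
        ≤ K * (N + 1 : ℝ) ^ d *
            ((M : ℝ) ^ (-(t₁ + t₂ - 1)) * (A : ℝ) + (M : ℝ) ^ (-(t₂ - 1))) := by
  refine ⟨Fintype.card X * Fintype.card Y + Fintype.card Y + 2, 2, two_pos, ?_⟩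
  intro Q star hQ P hP t₁ t₂ N M A hN hM hA m l
  set CA := exp (-(t₂ * log M)) * ((N : ℝ) + 1) ^ (Fintype.card X * Fintype.card Y)
  set CS := exp (-(t₁ * log M)) * ((N : ℝ) + 1) ^ Fintype.card Y
  calc _ ≤ ∑ m' ∈ univ.erase m, ∑ n ∈ Icc 1 (A + N - 1), ∑ i ∈ Icc 1 (min N n),
          (CA * CS + CA * ind (l ≤ n ∧ n < l + 2 * N)) := by
        gcongr with m' hm' n hn i hi
        rw [← mul_add]
        simp only [mem_Icc, le_min_iff] at hn hi
        exact sum_codebook_mul_ind_eventE_le hQ star hP t₁ t₂ (ne_of_mem_erase hm').symm l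
          hi.1 hi.2.1 hi.2.2 hn.2
    _ ≤ M * (N * ((A + N - 1 : ℕ) * (CA * CS) + 2 * N * CA)) :=
        sum_erase_sum_Icc_sum_Icc_le m N (A + N - 1) l (by positivity) (by positivity)
    _ ≤ _ := false_alarm_arith (by omega) hN hA t₁ t₂ _ _

end Async
end

section
/- Let J be a probability distribution on 𝒳×𝒴 (𝒳, 𝒴 finite) and let r satisfy 0 ≤ r < I(J). Then min{ D(V||J) : V a joint distribution on 𝒳×𝒴 with I(V) ≤ r } = min{ D(V||J) : V a joint distribution on 𝒳×𝒴 with I(V) = r }. -/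
/-!
Given `V` with `I(V) ≤ r < I(J)`, move `V` along the segment `(1 - t) V + t J` towards `J`.
On nonnegative vectors `I = H(X) + H(Y) - H(X,Y)` is continuous (since `x log x` is continuous
at `0`), so some point `W` of the segment has `I(W) = r`. Convexity of `x ↦ x log (x / c)`, which
vanishes at `c`, gives `D(W‖J) ≤ (1 - t) D(V‖J) ≤ D(V‖J)`.
-/

open scoped BigOperators ENNReal

namespace Async

variable {X : Type*} {Y : Type*}

open Real

lemma mi_eq_sum_negMulLog [Fintype X] [Fintype Y] {V : X × Y → ℝ} (hV : ∀ p, 0 ≤ V p) :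
    mi V = ∑ x, negMulLog (margX V x) + ∑ y, negMulLog (margY V y) - ∑ p, negMulLog (V p) := by
  have hterm : ∀ p : X × Y, V p * log (V p / (margX V p.1 * margY V p.2))
      = V p * log (margX V p.1)⁻¹ + V p * log (margY V p.2)⁻¹ - negMulLog (V p) := by
    rintro ⟨x, y⟩
    rcases (hV (x, y)).eq_or_lt with h0 | hpos
    · simp [← h0]
    · have hx : 0 < margX V x :=
        hpos.trans_le (Finset.single_le_sum (fun y _ => hV (x, y)) (Finset.mem_univ y))
      have hy : 0 < margY V y :=
        hpos.trans_le (Finset.single_le_sum (fun x _ => hV (x, y)) (Finset.mem_univ x))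
      rw [log_div hpos.ne' (by positivity), log_mul hx.ne' hy.ne', log_inv, log_inv, negMulLog]
      ring
  have hX : ∑ p : X × Y, V p * log (margX V p.1)⁻¹ = ∑ x, negMulLog (margX V x) := by
    simp only [Fintype.sum_prod_type, ← Finset.sum_mul, log_inv, negMulLog, margX]
    exact Finset.sum_congr rfl fun x _ => by ring
  have hY : ∑ p : X × Y, V p * log (margY V p.2)⁻¹ = ∑ y, negMulLog (margY V y) := by
    simp only [Fintype.sum_prod_type_right, ← Finset.sum_mul, log_inv, negMulLog, margY]
    exact Finset.sum_congr rfl fun y _ => by ring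
  simp only [mi, hterm, Finset.sum_sub_distrib, Finset.sum_add_distrib, hX, hY]

lemma continuousOn_mi [Fintype X] [Fintype Y] :
    ContinuousOn mi {V : X × Y → ℝ | ∀ p, 0 ≤ V p} := by
  refine ContinuousOn.congr (Continuous.continuousOn ?_) fun V hV => mi_eq_sum_negMulLog hV
  unfold margX margY
  fun_prop

lemma IsDist.lineMap {A : Type*} [Fintype A] {μ ν : A → ℝ} (hμ : IsDist μ) (hν : IsDist ν)
    {t : ℝ} (ht : t ∈ Set.Icc (0 : ℝ) 1) : IsDist (AffineMap.lineMap μ ν t) := by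
  simp only [IsDist, AffineMap.pi_lineMap_apply, AffineMap.lineMap_apply_ring]
  refine ⟨fun a => add_nonneg (mul_nonneg (sub_nonneg.2 ht.2) (hμ.1 a)) (mul_nonneg ht.1 (hν.1 a)),
    ?_⟩
  rw [Finset.sum_add_distrib, ← Finset.mul_sum, ← Finset.mul_sum, hμ.2, hν.2]
  ring

lemma mul_log_div_lineMap_le {x c t : ℝ} (hx : 0 ≤ x) (hc : 0 < c) (ht : t ∈ Set.Icc (0 : ℝ) 1) :
    ((1 - t) * x + t * c) * log (((1 - t) * x + t * c) / c) ≤ (1 - t) * (x * log (x / c)) := by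
  have hw : 0 ≤ (1 - t) * x + t * c :=
    add_nonneg (mul_nonneg (sub_nonneg.2 ht.2) hx) (mul_nonneg ht.1 hc.le)
  have hconv := convexOn_mul_log.2 (Set.mem_Ici.2 hx) (Set.mem_Ici.2 hc.le)
    (sub_nonneg.2 ht.2) ht.1 (sub_add_cancel 1 t)
  simp only [smul_eq_mul] at hconv
  have hsplit : ∀ y : ℝ, 0 ≤ y → y * log (y / c) = y * log y - y * log c := by
    intro y hy
    rcases hy.eq_or_lt with rfl | hy
    · simp
    · rw [log_div hy.ne' hc.ne']; ring
  rw [hsplit _ hw, hsplit _ hx]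
  linear_combination hconv

lemma klDivR_lineMap_le {A : Type*} [Fintype A] {μ ν : A → ℝ} (hμ : ∀ a, 0 ≤ μ a)
    (hν : ∀ a, 0 ≤ ν a) (hac : ∀ a, ν a = 0 → μ a = 0) {t : ℝ} (ht : t ∈ Set.Icc (0 : ℝ) 1) :
    klDivR (AffineMap.lineMap μ ν t) ν ≤ (1 - t) * klDivR μ ν := by
  simp only [klDivR, Finset.mul_sum, AffineMap.pi_lineMap_apply, AffineMap.lineMap_apply_ring]
  refine Finset.sum_le_sum fun a _ => ?_
  rcases (hν a).eq_or_lt with h0 | hpos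
  · simp [← h0, hac a h0.symm]
  · exact mul_log_div_lineMap_le (hμ a) hpos ht

lemma klDiv_of_absCont {A : Type*} [Fintype A] {μ ν : A → ℝ} (h : ∀ a, ν a = 0 → μ a = 0) :
    klDiv μ ν = ENNReal.ofReal (klDivR μ ν) :=
  if_pos h

lemma klDiv_of_not_absCont {A : Type*} [Fintype A] {μ ν : A → ℝ}
    (h : ¬∀ a, ν a = 0 → μ a = 0) : klDiv μ ν = ⊤ :=
  if_neg h

lemma klDiv_lineMap_le {A : Type*} [Fintype A] {μ ν : A → ℝ} (hμ : ∀ a, 0 ≤ μ a)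
    (hν : ∀ a, 0 ≤ ν a) {t : ℝ} (ht : t ∈ Set.Icc (0 : ℝ) 1) :
    klDiv (AffineMap.lineMap μ ν t) ν ≤ klDiv μ ν := by
  by_cases hac : ∀ a, ν a = 0 → μ a = 0
  · have hac' : ∀ a, ν a = 0 → AffineMap.lineMap μ ν t a = 0 := fun a h => by
      simp only [AffineMap.pi_lineMap_apply, AffineMap.lineMap_apply_ring, h, hac a h]
      ring
    rw [klDiv_of_absCont hac', klDiv_of_absCont hac]
    calc ENNReal.ofReal (klDivR (AffineMap.lineMap μ ν t) ν)
        ≤ ENNReal.ofReal ((1 - t) * klDivR μ ν) :=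
          ENNReal.ofReal_le_ofReal (klDivR_lineMap_le hμ hν hac ht)
      _ = ENNReal.ofReal (1 - t) * ENNReal.ofReal (klDivR μ ν) :=
          ENNReal.ofReal_mul (sub_nonneg.2 ht.2)
      _ ≤ ENNReal.ofReal (klDivR μ ν) :=
          mul_le_of_le_one_left' (ENNReal.ofReal_le_one.2 (by linarith [ht.1]))
  · rw [klDiv_of_not_absCont hac]
    exact le_top

lemma exists_mi_eq_klDiv_le [Fintype X] [Fintype Y] {V J : X × Y → ℝ} (hV : IsDist V)
    (hJ : IsDist J) {r : ℝ} (hr : r ∈ Set.Icc (mi V) (mi J)) :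
    ∃ W, IsDist W ∧ mi W = r ∧ klDiv W J ≤ klDiv V J := by
  have hcont : ContinuousOn (fun t : ℝ => mi (AffineMap.lineMap V J t)) (Set.Icc 0 1) :=
    continuousOn_mi.comp AffineMap.lineMap_continuous.continuousOn
      fun t ht => (hV.lineMap hJ ht).1
  have hends :
      r ∈ Set.Icc (mi (AffineMap.lineMap V J (0 : ℝ))) (mi (AffineMap.lineMap V J (1 : ℝ))) := by
    rwa [AffineMap.lineMap_apply_zero, AffineMap.lineMap_apply_one]
  obtain ⟨t, ht, hmi⟩ := intermediate_value_Icc zero_le_one hcont hends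
  exact ⟨_, hV.lineMap hJ ht, hmi, klDiv_lineMap_le hV.1 hJ.1 ht⟩

theorem min_le_eq_min_eq_general [Fintype X] [Fintype Y]
    (J : X × Y → ℝ) (hJ : IsDist J) (r : ℝ) (hrI : r < mi J) :
    sInf {v : ℝ≥0∞ | ∃ V : X × Y → ℝ, IsDist V ∧ mi V ≤ r ∧ v = klDiv V J}
      = sInf {v : ℝ≥0∞ | ∃ V : X × Y → ℝ, IsDist V ∧ mi V = r ∧ v = klDiv V J} := by
  refine le_antisymm (sInf_le_sInf ?_) (le_sInf ?_)
  · rintro v ⟨V, hV, hmi, rfl⟩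
    exact ⟨V, hV, hmi.le, rfl⟩
  · rintro v ⟨V, hV, hmi, rfl⟩
    obtain ⟨W, hW, hWmi, hle⟩ := exists_mi_eq_klDiv_le hV hJ ⟨hmi, hrI.le⟩
    exact le_trans (sInf_le ⟨W, hW, hWmi, rfl⟩) hle

/-- **Claim i.** For `0 ≤ r < I(J)`, the minimum of `D(V‖J)` over joint distributions
with `I(V) ≤ r` equals the minimum over joint distributions with `I(V) = r`. -/
theorem min_le_eq_min_eq [Fintype X] [Fintype Y]
    (J : X × Y → ℝ) (hJ : IsDist J) (r : ℝ) (hr0 : 0 ≤ r) (hrI : r < mi J) :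
    sInf {v : ℝ≥0∞ | ∃ V : X × Y → ℝ, IsDist V ∧ mi V ≤ r ∧ v = klDiv V J}
      = sInf {v : ℝ≥0∞ | ∃ V : X × Y → ℝ, IsDist V ∧ mi V = r ∧ v = klDiv V J} :=
  min_le_eq_min_eq_general J hJ r hrI

end Async
end

section
/- Let P be a distribution on a finite alphabet 𝒳 and let μ be a distribution on a finite alphabet 𝒴 with full support. Let (X₁,Y₁), …, (X_i,Y_i) be i.i.d. with common law P ⊗ μ (i.e., X_j ∼ P and Y_j ∼ μ independent). Then for any constants a, b ≥ 0, the probability that the empirical joint distribution P̂ of ((X₁,Y₁),…,(X_i,Y_i)) simultaneously satisfies I(P̂) ≥ a and D(P̂_Y || μ) ≥ b is at most (i+1)^{|𝒳||𝒴|} · e^{−i(a+b)}, where P̂_Y is the 𝒴-marginal of P̂. -/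
open scoped BigOperators ENNReal

namespace Async

variable {X : Type*} {Y : Type*}

open scoped Classical in
/-- Empirical joint distribution of a sequence of pairs. -/
noncomputable def empPair {i : ℕ} (z : Fin i → X × Y) : X × Y → ℝ :=
  fun p => ((Finset.univ.filter (fun j : Fin i => z j = p)).card : ℝ) / i

section Aux

open Finset

open scoped Classical

/-- Count of occurrences of `p` in the sequence `z`. -/
noncomputable def cnt {i : ℕ} (z : Fin i → X × Y) (p : X × Y) : ℕ :=
  (Finset.univ.filter (fun j : Fin i => z j = p)).card

lemma empPair_eq {i : ℕ} (z : Fin i → X × Y) (p : X × Y) :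
    empPair z p = (cnt z p : ℝ) / i := by
  simp [empPair, cnt]

lemma cnt_le {i : ℕ} (z : Fin i → X × Y) (p : X × Y) : cnt z p ≤ i := by
  simpa [cnt] using Finset.card_filter_le Finset.univ (fun j : Fin i => z j = p)

lemma sum_cnt [Fintype X] [Fintype Y] {i : ℕ} (z : Fin i → X × Y) :
    ∑ p, cnt z p = i := by
  have := Finset.card_eq_sum_card_fiberwise
    (s := (Finset.univ : Finset (Fin i))) (t := (Finset.univ : Finset (X × Y)))
    (f := z) (fun j _ => Finset.mem_univ (z j))
  simpa [cnt] using this.symm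

lemma exists_of_cnt_ne {i : ℕ} (z : Fin i → X × Y) (p : X × Y) (h : cnt z p ≠ 0) :
    ∃ j, z j = p := by
  obtain ⟨j, hj⟩ := Finset.card_ne_zero.mp h
  exact ⟨j, (Finset.mem_filter.mp hj).2⟩

lemma empPair_nonneg {i : ℕ} (z : Fin i → X × Y) (p : X × Y) : 0 ≤ empPair z p := by
  rw [empPair_eq]; positivity

lemma empPair_pos {i : ℕ} (hi : 0 < i) (z : Fin i → X × Y) (p : X × Y)
    (h : cnt z p ≠ 0) : 0 < empPair z p := by
  rw [empPair_eq]
  have : 0 < (cnt z p : ℝ) := by exact_mod_cast Nat.pos_of_ne_zero h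
  have hi' : 0 < (i : ℝ) := by exact_mod_cast hi
  positivity

lemma prod_comp_eq [Fintype X] [Fintype Y] {i : ℕ} (z : Fin i → X × Y) (g : X × Y → ℝ) :
    ∏ j, g (z j) = ∏ p, g p ^ cnt z p := by
  rw [← Finset.prod_fiberwise_of_maps_to (g := z)
      (fun j (_ : j ∈ (Finset.univ : Finset (Fin i))) => Finset.mem_univ (z j))
      (fun j => g (z j))]
  refine Finset.prod_congr rfl fun p _ => ?_
  rw [Finset.prod_congr rfl (fun j hj => congrArg g (Finset.mem_filter.mp hj).2),
    Finset.prod_const]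
  rfl

lemma prod_comp_exp [Fintype X] [Fintype Y] {i : ℕ} (z : Fin i → X × Y) {g : X × Y → ℝ}
    (hg : ∀ p, cnt z p ≠ 0 → 0 < g p) :
    ∏ j, g (z j) = Real.exp (∑ p, (cnt z p : ℝ) * Real.log (g p)) := by
  rw [prod_comp_eq, Real.exp_sum]
  refine Finset.prod_congr rfl fun p _ => ?_
  rcases eq_or_ne (cnt z p) 0 with h | h
  · simp [h]
  · rw [Real.exp_nat_mul, Real.exp_log (hg p h)]

lemma gibbs {A : Type*} [Fintype A] {q p : A → ℝ}
    (hq0 : ∀ a, 0 ≤ q a) (hp0 : ∀ a, 0 ≤ p a)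
    (hq1 : ∑ a, q a = 1) (hp1 : ∑ a, p a = 1)
    (hac : ∀ a, p a = 0 → q a = 0) :
    0 ≤ klDivR q p := by
  have key : ∀ a, q a - p a ≤ q a * Real.log (q a / p a) := by
    intro a
    rcases eq_or_lt_of_le (hq0 a) with h | h
    · rw [← h]; simp; linarith [hp0 a]
    · have hp : 0 < p a := by
        rcases eq_or_lt_of_le (hp0 a) with h0 | h0
        · exact absurd (hac a h0.symm) (by linarith)
        · exact h0
      have hlog : Real.log (p a / q a) ≤ p a / q a - 1 :=
        Real.log_le_sub_one_of_pos (by positivity)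
      have hneg : Real.log (q a / p a) = - Real.log (p a / q a) := by
        rw [← Real.log_inv]; congr 1; field_simp
      have hmul := mul_le_mul_of_nonneg_left hlog (le_of_lt h)
      have hqp : q a * (p a / q a) = p a := by field_simp
      rw [hneg]; nlinarith
  have : (0 : ℝ) = ∑ a, (q a - p a) := by
    rw [Finset.sum_sub_distrib, hq1, hp1]; ring
  rw [klDivR, this]
  exact Finset.sum_le_sum fun a _ => key a

lemma sum_margX [Fintype X] [Fintype Y] (V : X × Y → ℝ) (c : X → ℝ) :
    ∑ p : X × Y, V p * c p.1 = ∑ x, margX V x * c x := by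
  rw [Fintype.sum_prod_type]
  exact Finset.sum_congr rfl fun x _ => by rw [margX, Finset.sum_mul]

lemma sum_margY [Fintype X] [Fintype Y] (V : X × Y → ℝ) (c : Y → ℝ) :
    ∑ p : X × Y, V p * c p.2 = ∑ y, margY V y * c y := by
  rw [Fintype.sum_prod_type, Finset.sum_comm]
  exact Finset.sum_congr rfl fun y _ => by rw [margY, Finset.sum_mul]

lemma margX_pos [Fintype X] [Fintype Y] {V : X × Y → ℝ} (hV0 : ∀ p, 0 ≤ V p)
    (p : X × Y) (h : 0 < V p) : 0 < margX V p.1 := by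
  have : V (p.1, p.2) ≤ margX V p.1 :=
    Finset.single_le_sum (f := fun y => V (p.1, y)) (fun y _ => hV0 _) (Finset.mem_univ p.2)
  simpa using lt_of_lt_of_le h this

lemma margY_pos [Fintype X] [Fintype Y] {V : X × Y → ℝ} (hV0 : ∀ p, 0 ≤ V p)
    (p : X × Y) (h : 0 < V p) : 0 < margY V p.2 := by
  have : V (p.1, p.2) ≤ margY V p.2 :=
    Finset.single_le_sum (f := fun x => V (x, p.2)) (fun x _ => hV0 _) (Finset.mem_univ p.1)
  simpa using lt_of_lt_of_le h this

lemma klDivR_decomp [Fintype X] [Fintype Y] {V : X × Y → ℝ} {P : X → ℝ} {μ : Y → ℝ}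
    (hV0 : ∀ p, 0 ≤ V p)
    (hPs : ∀ p, V p ≠ 0 → 0 < P p.1)
    (hμ : ∀ y, 0 < μ y) :
    klDivR V (fun p => P p.1 * μ p.2)
      = mi V + klDivR (margX V) P + klDivR (margY V) μ := by
  have point : ∀ p : X × Y,
      V p * Real.log (V p / (P p.1 * μ p.2))
        = V p * Real.log (V p / (margX V p.1 * margY V p.2))
          + V p * Real.log (margX V p.1 / P p.1)
          + V p * Real.log (margY V p.2 / μ p.2) := by
    intro p
    rcases eq_or_ne (V p) 0 with h | h
    · simp [h]
    · have hV : 0 < V p := lt_of_le_of_ne (hV0 p) (Ne.symm h)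
      have hmX := margX_pos hV0 p hV
      have hmY := margY_pos hV0 p hV
      have hPp := hPs p h
      have hμp := hμ p.2
      rw [Real.log_div h (by positivity), Real.log_mul hPp.ne' hμp.ne',
        Real.log_div h (by positivity), Real.log_mul hmX.ne' hmY.ne',
        Real.log_div hmX.ne' hPp.ne', Real.log_div hmY.ne' hμp.ne']
      ring
  rw [klDivR]
  calc ∑ p : X × Y, V p * Real.log (V p / (P p.1 * μ p.2))
      = ∑ p : X × Y, (V p * Real.log (V p / (margX V p.1 * margY V p.2))
          + V p * Real.log (margX V p.1 / P p.1)
          + V p * Real.log (margY V p.2 / μ p.2)) :=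
        Finset.sum_congr rfl fun p _ => point p
    _ = mi V + klDivR (margX V) P + klDivR (margY V) μ := by
        rw [Finset.sum_add_distrib, Finset.sum_add_distrib,
          sum_margX V (fun x => Real.log (margX V x / P x)),
          sum_margY V (fun y => Real.log (margY V y / μ y))]
        rfl

lemma counting [Fintype X] [Fintype Y] {i : ℕ} :
    ∑ z : Fin i → X × Y, ∏ j, empPair z (z j)
      ≤ (i + 1 : ℝ) ^ (Fintype.card X * Fintype.card Y) := by
  set Φ : (Fin i → X × Y) → ((X × Y) → Fin (i + 1)) :=
    fun z p => ⟨cnt z p, Nat.lt_succ_of_le (cnt_le z p)⟩ with hΦ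
  rw [← Finset.sum_fiberwise_of_maps_to (g := Φ)
      (fun z (_ : z ∈ (Finset.univ : Finset (Fin i → X × Y))) => Finset.mem_univ (Φ z))
      (fun z => ∏ j, empPair z (z j))]
  have hbound : ∀ N : (X × Y) → Fin (i + 1),
      ∑ z ∈ Finset.univ.filter (fun z => Φ z = N), ∏ j, empPair z (z j) ≤ 1 := by
    intro N
    rcases Finset.eq_empty_or_nonempty (Finset.univ.filter (fun z => Φ z = N)) with he | hne
    · simp [he]
    · obtain ⟨z0, hz0⟩ := hne
      have hz0' : Φ z0 = N := (Finset.mem_filter.mp hz0).2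
      have key : ∑ z : Fin i → X × Y, ∏ j, (((N (z j) : ℕ) : ℝ) / i)
          = (∑ p, ((N p : ℕ) : ℝ) / i) ^ i := by
        have h := Finset.prod_univ_sum (t := fun _ : Fin i => (Finset.univ : Finset (X × Y)))
          (f := fun _ p => ((N p : ℕ) : ℝ) / i)
        rw [← Fintype.piFinset_univ, ← h]
        simp
      have hsum1 : (∑ p, ((N p : ℕ) : ℝ) / i) ^ i ≤ 1 := by
        rcases Nat.eq_zero_or_pos i with hi | hi
        · simp [hi]
        · have : ∑ p, ((N p : ℕ) : ℝ) / i = 1 := by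
            rw [← Finset.sum_div]
            have : ∑ p, ((N p : ℕ) : ℝ) = i := by
              rw [← hz0']
              simp only [hΦ]
              exact_mod_cast congrArg (Nat.cast (R := ℝ)) (sum_cnt z0)
            rw [this]
            field_simp
          rw [this, one_pow]
      calc ∑ z ∈ Finset.univ.filter (fun z => Φ z = N), ∏ j, empPair z (z j)
          = ∑ z ∈ Finset.univ.filter (fun z => Φ z = N),
              ∏ j, (((N (z j) : ℕ) : ℝ) / i) := by
            refine Finset.sum_congr rfl fun z hz => Finset.prod_congr rfl fun j _ => ?_
            have hz' : Φ z = N := (Finset.mem_filter.mp hz).2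
            rw [empPair_eq, ← hz']
        _ ≤ ∑ z : Fin i → X × Y, ∏ j, (((N (z j) : ℕ) : ℝ) / i) := by
            refine Finset.sum_le_sum_of_subset_of_nonneg (Finset.filter_subset _ _)
              fun z _ _ => Finset.prod_nonneg fun j _ => by positivity
        _ ≤ 1 := by rw [key]; exact hsum1
  calc ∑ N : (X × Y) → Fin (i + 1),
        ∑ z ∈ Finset.univ.filter (fun z => Φ z = N), ∏ j, empPair z (z j)
      ≤ ∑ _N : (X × Y) → Fin (i + 1), (1 : ℝ) :=
        Finset.sum_le_sum fun N _ => hbound N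
    _ = (i + 1 : ℝ) ^ (Fintype.card X * Fintype.card Y) := by
        rw [Finset.sum_const, Finset.card_univ, Fintype.card_fun]
        simp [Fintype.card_prod]

end Aux

/-- **Method-of-types bound (Case I).** If `(X₁,Y₁),…,(X_i,Y_i)` are i.i.d. `P ⊗ μ`
with `μ` of full support, then for any `a, b ≥ 0` the probability that the empirical
joint distribution `P̂` satisfies both `I(P̂) ≥ a` and `D(P̂_Y‖μ) ≥ b` is at most
`(i+1)^{|𝒳||𝒴|} e^{-i(a+b)}`. -/
theorem empirical_mi_divergence_bound [Fintype X] [Fintype Y]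
    (P : X → ℝ) (μ : Y → ℝ) (hP : IsDist P) (hμ : IsDist μ)
    (hμpos : ∀ y : Y, 0 < μ y)
    (i : ℕ) (a b : ℝ) (ha : 0 ≤ a) (hb : 0 ≤ b) :
    (∑ z : Fin i → X × Y, (∏ j, P (z j).1 * μ (z j).2) *
        ind (a ≤ mi (empPair z) ∧ b ≤ klDivR (margY (empPair z)) μ))
      ≤ (i + 1 : ℝ) ^ (Fintype.card X * Fintype.card Y) * Real.exp (-(i * (a + b))) := by
  classical
  obtain ⟨hP0, hP1⟩ := hP
  obtain ⟨hμ0, hμ1⟩ := hμ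
  rcases Nat.eq_zero_or_pos i with rfl | hi
  · have h1 : ∀ z : Fin 0 → X × Y, (∏ j, P (z j).1 * μ (z j).2) *
        ind (a ≤ mi (empPair z) ∧ b ≤ klDivR (margY (empPair z)) μ) ≤ 1 := by
      intro z
      have hprod : ∏ j : Fin 0, P (z j).1 * μ (z j).2 = 1 := by simp
      rw [hprod, one_mul, ind]
      split_ifs <;> norm_num
    calc ∑ z : Fin 0 → X × Y, (∏ j, P (z j).1 * μ (z j).2) *
          ind (a ≤ mi (empPair z) ∧ b ≤ klDivR (margY (empPair z)) μ)
        ≤ ∑ _z : Fin 0 → X × Y, (1 : ℝ) := Finset.sum_le_sum fun z _ => h1 z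
      _ = 1 := by simp
      _ ≤ _ := by norm_num
  -- main case `0 < i`
  have hind01 : ∀ p : Prop, ind p ≤ 1 := by
    intro p; rw [ind]; split_ifs <;> norm_num
  have hind0 : ∀ p : Prop, 0 ≤ ind p := by
    intro p; rw [ind]; split_ifs <;> norm_num
  have main : ∀ z : Fin i → X × Y,
      (∏ j, P (z j).1 * μ (z j).2) *
          ind (a ≤ mi (empPair z) ∧ b ≤ klDivR (margY (empPair z)) μ)
        ≤ Real.exp (-(i * (a + b))) * ((∏ j, empPair z (z j)) *
            ind (a ≤ mi (empPair z) ∧ b ≤ klDivR (margY (empPair z)) μ)) := by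
    intro z
    have hprode : 0 ≤ ∏ j, empPair z (z j) :=
      Finset.prod_nonneg fun j _ => empPair_nonneg z (z j)
    by_cases hevz : a ≤ mi (empPair z) ∧ b ≤ klDivR (margY (empPair z)) μ
    swap
    · simp [ind, hevz]
    rw [ind, if_pos hevz, mul_one, mul_one]
    by_cases hsupp : ∀ j, P (z j).1 ≠ 0
    swap
    · push_neg at hsupp
      obtain ⟨j, hj⟩ := hsupp
      rw [Finset.prod_eq_zero (Finset.mem_univ j) (by rw [hj, zero_mul])]
      exact mul_nonneg (Real.exp_nonneg _) hprode
    have hPpos : ∀ p : X × Y, cnt z p ≠ 0 → 0 < P p.1 := by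
      intro p hp
      obtain ⟨j, hj⟩ := exists_of_cnt_ne z p hp
      rw [← hj]
      exact lt_of_le_of_ne (hP0 _) (Ne.symm (hsupp j))
    have hwpos : ∀ p : X × Y, cnt z p ≠ 0 → 0 < P p.1 * μ p.2 := fun p hp =>
      mul_pos (hPpos p hp) (hμpos p.2)
    have hepos : ∀ p : X × Y, cnt z p ≠ 0 → 0 < empPair z p := fun p hp =>
      empPair_pos hi z p hp
    have hcnt_of_emp : ∀ p : X × Y, empPair z p ≠ 0 → cnt z p ≠ 0 := by
      intro p hp h0
      exact hp (by rw [empPair_eq, h0]; simp)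
    -- key change-of-measure identity
    have key : ∏ j, P (z j).1 * μ (z j).2
        = Real.exp (-(i * klDivR (empPair z) (fun p => P p.1 * μ p.2))) *
            ∏ j, empPair z (z j) := by
      rw [prod_comp_exp z hwpos, prod_comp_exp z hepos, ← Real.exp_add]
      congr 1
      have point : ∀ p : X × Y, (cnt z p : ℝ) * Real.log (P p.1 * μ p.2)
          = -((i : ℝ) * (empPair z p * Real.log (empPair z p / (P p.1 * μ p.2))))
            + (cnt z p : ℝ) * Real.log (empPair z p) := by
        intro p
        rcases eq_or_ne (cnt z p) 0 with h | h
        · have : empPair z p = 0 := by rw [empPair_eq, h]; simp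
          simp [h, this]
        · have h1 := hwpos p h
          have h2 := hepos p h
          have hie : (i : ℝ) * empPair z p = (cnt z p : ℝ) := by
            rw [empPair_eq]
            have hi' : (i : ℝ) ≠ 0 := by exact_mod_cast hi.ne'
            field_simp
          rw [Real.log_div h2.ne' h1.ne', ← mul_assoc, hie]
          ring
      rw [klDivR, Finset.mul_sum, ← Finset.sum_neg_distrib, ← Finset.sum_add_distrib]
      exact Finset.sum_congr rfl fun p _ => point p
    -- decomposition and Gibbs
    have hdec := klDivR_decomp (V := empPair z) (P := P) (μ := μ)
      (empPair_nonneg z) (fun p hp => hPpos p (hcnt_of_emp p hp)) hμpos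
    have hsum1 : ∑ p : X × Y, empPair z p = 1 := by
      have h1 : ∑ p : X × Y, empPair z p = (∑ p : X × Y, (cnt z p : ℝ)) / i := by
        rw [Finset.sum_div]
        exact Finset.sum_congr rfl fun p _ => empPair_eq z p
      have h2 : ∑ p : X × Y, (cnt z p : ℝ) = i := by
        exact_mod_cast congrArg (Nat.cast (R := ℝ)) (sum_cnt z)
      rw [h1, h2]
      field_simp
    have hmargsum : ∑ x, margX (empPair z) x = 1 := by
      rw [← hsum1, Fintype.sum_prod_type]
      rfl
    have hmarg0 : ∀ x, 0 ≤ margX (empPair z) x := fun x =>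
      Finset.sum_nonneg fun y _ => empPair_nonneg z (x, y)
    have hac : ∀ x, P x = 0 → margX (empPair z) x = 0 := by
      intro x hx
      refine Finset.sum_eq_zero fun y _ => ?_
      by_contra hne
      exact absurd hx (ne_of_gt (hPpos (x, y) (hcnt_of_emp (x, y) hne)))
    have hgX : 0 ≤ klDivR (margX (empPair z)) P :=
      gibbs hmarg0 hP0 hmargsum hP1 hac
    have hD : a + b ≤ klDivR (empPair z) (fun p => P p.1 * μ p.2) := by
      rw [hdec]
      linarith [hevz.1, hevz.2]
    rw [key]
    refine mul_le_mul_of_nonneg_right (Real.exp_le_exp.mpr ?_) hprode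
    have hi0 : (0 : ℝ) ≤ (i : ℝ) := by positivity
    have := mul_le_mul_of_nonneg_left hD hi0
    linarith
  calc ∑ z : Fin i → X × Y, (∏ j, P (z j).1 * μ (z j).2) *
        ind (a ≤ mi (empPair z) ∧ b ≤ klDivR (margY (empPair z)) μ)
      ≤ ∑ z : Fin i → X × Y, Real.exp (-(i * (a + b))) * ((∏ j, empPair z (z j)) *
          ind (a ≤ mi (empPair z) ∧ b ≤ klDivR (margY (empPair z)) μ)) :=
        Finset.sum_le_sum fun z _ => main z
    _ = Real.exp (-(i * (a + b))) * ∑ z : Fin i → X × Y, (∏ j, empPair z (z j)) *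
          ind (a ≤ mi (empPair z) ∧ b ≤ klDivR (margY (empPair z)) μ) := by
        rw [Finset.mul_sum]
    _ ≤ Real.exp (-(i * (a + b))) * ∑ z : Fin i → X × Y, ∏ j, empPair z (z j) := by
        refine mul_le_mul_of_nonneg_left (Finset.sum_le_sum fun z _ => ?_)
          (Real.exp_nonneg _)
        exact mul_le_of_le_one_right
          (Finset.prod_nonneg fun j _ => empPair_nonneg z (z j)) (hind01 _)
    _ ≤ Real.exp (-(i * (a + b))) * (i + 1 : ℝ) ^ (Fintype.card X * Fintype.card Y) :=
        mul_le_mul_of_nonneg_left counting (Real.exp_nonneg _)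
    _ = (i + 1 : ℝ) ^ (Fintype.card X * Fintype.card Y) * Real.exp (-(i * (a + b))) :=
        mul_comm _ _

end Async
end
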